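/- arXiv:math/0602218 — 7 statements merged into one kernel-verified Lean document; each statement's English description precedes it below -/
import Mathlib

section
/- Let R be a commutative ring with identity, t ≥ 1, 1 ≤ j_1,…,j_t ≤ n, and r_1,…,r_t ∈ R; set x_s = 1 + r_s y_{j_s}, a unit of A^R(y_1,…,y_n). Then: (1) the left-normed iterated group commutator of units satisfies [[x_1,x_2],…,x_t] = 1 + r_1 r_2 ⋯ r_t [[y_{j_1},y_{j_2}],…,y_{j_t}], where on the right the bracket is the left-normed iterated ring commutator with [a,b] = ab − ba; (2) for integers m_1,…,m_t with m = m_1 m_2 ⋯ m_t, one has [[x_1^{m_1},x_2^{m_2}],…,x_t^{m_t}] = 1 + m r_1 r_2 ⋯ r_t [[y_{j_1},y_{j_2}],…,y_{j_t}]. -/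
/-!
STATEMENT 1: In the Cohen algebra `A^R(y_1,…,y_n)`, each `x_s = 1 + r_s • y_{j_s}` is a unit,
and left-normed iterated group commutators of these units satisfy
`[[x_1,x_2],…,x_t] = 1 + r_1 ⋯ r_t [[y_{j_1},y_{j_2}],…,y_{j_t}]` and, for integer exponents,
`[[x_1^{m_1},…],x_t^{m_t}] = 1 + (m_1 ⋯ m_t) r_1 ⋯ r_t [[y_{j_1},…],y_{j_t}]`.
(Here the index set `{1,…,t}` with `t ≥ 1` is modelled by `Fin (t+1)` with `t : ℕ`.)
-/

universe u

def cohenRel (R : Type u) [CommRing R] (n : ℕ) :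
    FreeAlgebra R (Fin n) → FreeAlgebra R (Fin n) → Prop :=
  fun a b => b = 0 ∧ ∃ (t : ℕ) (f : Fin t → Fin n), ¬ Function.Injective f ∧
    a = (List.ofFn fun s => FreeAlgebra.ι R (f s)).prod

abbrev CohenAlgebra (R : Type u) [CommRing R] (n : ℕ) : Type u := RingQuot (cohenRel R n)

noncomputable def ya (R : Type u) [CommRing R] {n : ℕ} (j : Fin n) : CohenAlgebra R n :=
  RingQuot.mkAlgHom R (cohenRel R n) (FreeAlgebra.ι R j)

/-- The left-normed iterated group commutator `[[a, l₁], l₂], …]` with `[x,y] = x⁻¹y⁻¹xy`. -/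
def grpComm {G : Type*} [Group G] (a : G) (l : List G) : G :=
  l.foldl (fun x y => x⁻¹ * y⁻¹ * x * y) a

/-- The left-normed iterated ring commutator `[[a, l₁], l₂], …]` with `[x,y] = xy - yx`. -/
def ringComm {A : Type*} [Ring A] (a : A) (l : List A) : A :=
  l.foldl (fun x y => x * y - y * x) a

variable {R : Type u} [CommRing R] {n : ℕ}

lemma ya_eq (j : Fin n) : ya R j = RingQuot.mkAlgHom R (cohenRel R n) (FreeAlgebra.ι R j) := rfl

lemma mk_list_prod (L : List (Fin n)) :
    (L.map (ya R)).prod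
      = RingQuot.mkAlgHom R (cohenRel R n) ((L.map (FreeAlgebra.ι R)).prod) := by
  rw [map_list_prod, List.map_map]
  rfl

lemma dup_prod_eq_zero (L : List (Fin n)) (h : ¬ L.Nodup) :
    (L.map (ya R)).prod = 0 := by
  rw [mk_list_prod]
  have hrel : cohenRel R n ((L.map (FreeAlgebra.ι R)).prod) 0 := by
    refine ⟨rfl, L.length, L.get, ?_, ?_⟩
    · rwa [← List.nodup_iff_injective_get]
    · rw [show (List.ofFn fun s => FreeAlgebra.ι R (L.get s))
          = (List.ofFn L.get).map (FreeAlgebra.ι R) by rw [List.map_ofFn]; rfl,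
        List.ofFn_get]
  calc RingQuot.mkAlgHom R (cohenRel R n) ((L.map (FreeAlgebra.ι R)).prod)
      = RingQuot.mkAlgHom R (cohenRel R n) 0 := RingQuot.mkAlgHom_rel R hrel
    _ = 0 := map_zero _

/-- every element of the Cohen algebra lies in the span of monomials -/
lemma monomial_induction {C : CohenAlgebra R n → Prop}
    (hmono : ∀ L : List (Fin n), C ((L.map (ya R)).prod))
    (hadd : ∀ x y, C x → C y → C (x + y))
    (hsmul : ∀ (r : R) x, C x → C (r • x)) :
    ∀ x, C x := by
  have htop : Algebra.adjoin R (Set.range (ya R (n := n))) = ⊤ := by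
    have : Set.range (ya R (n := n))
        = (RingQuot.mkAlgHom R (cohenRel R n)) '' Set.range (FreeAlgebra.ι R) := by
      rw [← Set.range_comp]; rfl
    rw [this, ← AlgHom.map_adjoin, FreeAlgebra.adjoin_range_ι, Algebra.map_top,
      AlgHom.range_eq_top]
    exact RingQuot.mkAlgHom_surjective R _
  intro x
  have hx : x ∈ Submodule.span R ((Submonoid.closure (Set.range (ya R (n := n))) : Submonoid _) : Set _) := by
    rw [← Algebra.adjoin_eq_span, htop]; trivial
  refine Submodule.span_induction (p := fun x _ => C x) ?_ ?_ (fun a b _ _ => hadd a b)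
    (fun r a _ => hsmul r a) hx
  · intro m hm
    obtain ⟨l, hl, rfl⟩ := Submonoid.exists_list_of_mem_closure hm
    clear hx htop hm
    obtain ⟨L, rfl⟩ : ∃ L : List (Fin n), l = L.map (ya R) := by
      induction l with
      | nil => exact ⟨[], rfl⟩
      | cons a l ih =>
        obtain ⟨L, rfl⟩ := ih (fun y hy => hl y (List.mem_cons_of_mem _ hy))
        obtain ⟨i, rfl⟩ := hl a List.mem_cons_self
        exact ⟨i :: L, rfl⟩
    exact hmono L
  · simpa using hsmul 0 _ (hmono [])

/-- monomials containing a fixed index `i` -/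
def Pset (i : Fin n) : Set (CohenAlgebra R n) :=
  {m | ∃ L : List (Fin n), i ∈ L ∧ m = (L.map (ya R)).prod}

def P (i : Fin n) : Submodule R (CohenAlgebra R n) := Submodule.span R (Pset i)

lemma ya_mem_P (i : Fin n) : ya R i ∈ P i :=
  Submodule.subset_span ⟨[i], List.mem_singleton_self i, by simp⟩

lemma sandwich (i : Fin n) (a : CohenAlgebra R n) : ya R i * a * ya R i = 0 := by
  induction a using monomial_induction with
  | hmono L =>
    have : ya R i * (L.map (ya R)).prod * ya R i = ((i :: (L ++ [i])).map (ya R)).prod := by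
      simp [List.prod_cons, mul_assoc]
    rw [this, dup_prod_eq_zero]
    intro h
    exact (List.nodup_cons.mp h).1 (by simp)
  | hadd x y hx hy => rw [mul_add, add_mul, hx, hy, add_zero]
  | hsmul r x hx => rw [mul_smul_comm, smul_mul_assoc, hx, smul_zero]

lemma P_mul_right {i : Fin n} {c : CohenAlgebra R n} (hc : c ∈ P i) (d : CohenAlgebra R n) :
    c * d ∈ P i := by
  induction d using monomial_induction with
  | hmono L =>
    refine Submodule.span_induction (p := fun c _ => c * (L.map (ya R)).prod ∈ P i)
      ?_ (by simp [P]) (fun x y _ _ hx hy => by rw [add_mul]; exact add_mem hx hy)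
      (fun r x _ hx => by rw [smul_mul_assoc]; exact Submodule.smul_mem _ r hx) hc
    intro m hm
    obtain ⟨L', hiL', rfl⟩ := hm
    refine Submodule.subset_span ⟨L' ++ L, by simp [hiL'], by simp⟩
  | hadd x y hx hy => rw [mul_add]; exact add_mem hx hy
  | hsmul r x hx => rw [mul_smul_comm]; exact Submodule.smul_mem _ r hx

lemma P_mul_left {i : Fin n} {c : CohenAlgebra R n} (hc : c ∈ P i) (d : CohenAlgebra R n) :
    d * c ∈ P i := by
  induction d using monomial_induction with
  | hmono L =>
    refine Submodule.span_induction (p := fun c _ => (L.map (ya R)).prod * c ∈ P i)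
      ?_ (by simp [P]) (fun x y _ _ hx hy => by rw [mul_add]; exact add_mem hx hy)
      (fun r x _ hx => by rw [mul_smul_comm]; exact Submodule.smul_mem _ r hx) hc
    intro m hm
    obtain ⟨L', hiL', rfl⟩ := hm
    refine Submodule.subset_span ⟨L ++ L', by simp [hiL'], by simp⟩
  | hadd x y hx hy => rw [add_mul]; exact add_mem hx hy
  | hsmul r x hx => rw [smul_mul_assoc]; exact Submodule.smul_mem _ r hx

lemma P_mul_P {i : Fin n} {c d : CohenAlgebra R n} (hc : c ∈ P i) (hd : d ∈ P i) :
    c * d = 0 := by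
  refine Submodule.span_induction (p := fun c _ => c * d = 0) ?_ (by simp)
    (fun x y _ _ hx hy => by rw [add_mul, hx, hy, add_zero])
    (fun r x _ hx => by rw [smul_mul_assoc, hx, smul_zero]) hc
  intro m hm
  obtain ⟨L, hiL, rfl⟩ := hm
  refine Submodule.span_induction (p := fun d _ => (L.map (ya R)).prod * d = 0) ?_ (by simp)
    (fun x y _ _ hx hy => by rw [mul_add, hx, hy, add_zero])
    (fun r x _ hx => by rw [mul_smul_comm, hx, smul_zero]) hd
  intro m' hm'
  obtain ⟨L', hiL', rfl⟩ := hm'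
  rw [show (L.map (ya R)).prod * (L'.map (ya R)).prod = ((L ++ L').map (ya R)).prod by simp]
  refine dup_prod_eq_zero _ ?_
  intro h
  exact (List.disjoint_of_nodup_append h) hiL hiL'
lemma comm_expand {A : Type*} [Ring A] (a b : A) (ha : a * a = 0) (hb : b * b = 0)
    (haba : a * b * a = 0) (hbab : b * a * b = 0) :
    (1 - a) * ((1 - b) * ((1 + a) * (1 + b))) = 1 + (a * b - b * a) := by
  have h1 : a * (b * a) = 0 := by rw [← mul_assoc]; exact haba
  have h2 : b * (a * b) = 0 := by rw [← mul_assoc]; exact hbab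
  have h3 : a * (a * b) = 0 := by rw [← mul_assoc, ha, zero_mul]
  have h4 : a * (b * b) = 0 := by rw [hb, mul_zero]
  noncomm_ring [ha, hb, h1, h2, h3, h4]


lemma one_add_mul_one_sub {A : Type*} [Ring A] (v : A) (hv : v * v = 0) :
    (1 + v) * (1 - v) = 1 := by noncomm_ring [hv]

lemma one_sub_mul_one_add {A : Type*} [Ring A] (v : A) (hv : v * v = 0) :
    (1 - v) * (1 + v) = 1 := by noncomm_ring [hv]

lemma one_add_zsmul_mul {A : Type*} [Ring A] (a : A) (ha : a * a = 0) (p q : ℤ) :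
    (1 + p • a) * (1 + q • a) = 1 + (p + q) • a := by
  rw [add_mul, one_mul, mul_add, mul_one, smul_mul_assoc, mul_smul_comm, ha, smul_zero,
    smul_zero, add_zero, add_smul]
  abel

lemma ya_sq (jj : Fin n) : ya R jj * ya R jj = 0 := by
  have := dup_prod_eq_zero (R := R) [jj, jj] (by simp)
  simpa [mul_one] using this

lemma smul_ya_sq (jj : Fin n) (rr : R) : (rr • ya R jj) * (rr • ya R jj) = 0 := by
  rw [smul_mul_smul_comm, ya_sq, smul_zero]

/-- the unit 1 + r • y_j -/
noncomputable def xU (jj : Fin n) (rr : R) : (CohenAlgebra R n)ˣ where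
  val := 1 + rr • ya R jj
  inv := 1 - rr • ya R jj
  val_inv := one_add_mul_one_sub _ (smul_ya_sq jj rr)
  inv_val := one_sub_mul_one_add _ (smul_ya_sq jj rr)

lemma xU_val (jj : Fin n) (rr : R) :
    ((xU jj rr : (CohenAlgebra R n)ˣ) : CohenAlgebra R n) = 1 + rr • ya R jj := rfl

lemma xU_inv (jj : Fin n) (rr : R) :
    (((xU jj rr)⁻¹ : (CohenAlgebra R n)ˣ) : CohenAlgebra R n) = 1 - rr • ya R jj := rfl

lemma unit_inv_val {u : (CohenAlgebra R n)ˣ} {a : CohenAlgebra R n}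
    (hu : (u : CohenAlgebra R n) = 1 + a) (ha : a * a = 0) :
    ((u⁻¹ : (CohenAlgebra R n)ˣ) : CohenAlgebra R n) = 1 - a := by
  have h2 : (u : CohenAlgebra R n) * (1 - a) = 1 := by
    rw [hu]; exact one_add_mul_one_sub _ ha
  calc ((u⁻¹ : (CohenAlgebra R n)ˣ) : CohenAlgebra R n)
      = (u⁻¹ : (CohenAlgebra R n)ˣ) * ((u : CohenAlgebra R n) * (1 - a)) := by rw [h2, mul_one]
    _ = 1 - a := by rw [← mul_assoc, ← Units.val_mul, inv_mul_cancel, Units.val_one, one_mul]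

lemma unit_zpow {u : (CohenAlgebra R n)ˣ} {a : CohenAlgebra R n}
    (hu : (u : CohenAlgebra R n) = 1 + a) (ha : a * a = 0) (m : ℤ) :
    ((u ^ m : (CohenAlgebra R n)ˣ) : CohenAlgebra R n) = 1 + m • a := by
  have hui : ((u⁻¹ : (CohenAlgebra R n)ˣ) : CohenAlgebra R n) = 1 - a := unit_inv_val hu ha
  induction m using Int.induction_on with
  | zero => simp
  | succ k ih =>
    rw [zpow_add_one, Units.val_mul, ih, hu,
      show (1 + a : CohenAlgebra R n) = 1 + (1:ℤ) • a by rw [one_smul],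
      one_add_zsmul_mul a ha]
  | pred k ih =>
    rw [zpow_sub_one, Units.val_mul, ih, hui,
      show (1 - a : CohenAlgebra R n) = 1 + (-1:ℤ) • a by rw [neg_smul, one_smul, sub_eq_add_neg],
      one_add_zsmul_mul a ha, sub_eq_add_neg]

lemma fold_comm (i : Fin n) (l : List (Fin n × R)) :
    ∀ (u : (CohenAlgebra R n)ˣ) (c : CohenAlgebra R n),
    ((u : CohenAlgebra R n) = 1 + c) → (((u⁻¹ : (CohenAlgebra R n)ˣ) : CohenAlgebra R n) = 1 - c) →
    c ∈ P i →
    (((grpComm u (l.map fun p => xU p.1 p.2) : (CohenAlgebra R n)ˣ) : CohenAlgebra R n)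
        = 1 + l.foldl (fun d p => p.2 • (d * ya R p.1 - ya R p.1 * d)) c ∧
     ((((grpComm u (l.map fun p => xU p.1 p.2))⁻¹ : (CohenAlgebra R n)ˣ) : CohenAlgebra R n)
        = 1 - l.foldl (fun d p => p.2 • (d * ya R p.1 - ya R p.1 * d)) c) ∧
     l.foldl (fun d p => p.2 • (d * ya R p.1 - ya R p.1 * d)) c ∈ P i) := by
  induction l with
  | nil => exact fun u c hu hui hc => ⟨hu, hui, hc⟩
  | cons p l ih =>
    intro u c hu hui hc
    obtain ⟨jj, rr⟩ := p
    set b : CohenAlgebra R n := rr • ya R jj with hb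
    have hbb : b * b = 0 := smul_ya_sq jj rr
    have hcc : c * c = 0 := P_mul_P hc hc
    have hcbc : c * b * c = 0 := P_mul_P (P_mul_right hc b) hc
    have hbcb : b * c * b = 0 := by
      have h0 : ya R jj * c * ya R jj = 0 := sandwich jj c
      rw [hb, smul_mul_assoc, smul_mul_assoc, mul_smul_comm, h0]
      simp
    set u₁ : (CohenAlgebra R n)ˣ := u⁻¹ * (xU jj rr)⁻¹ * u * (xU jj rr) with hu₁def
    set c₁ : CohenAlgebra R n := rr • (c * ya R jj - ya R jj * c) with hc₁def
    have hcb : c * b - b * c = c₁ := by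
      rw [hb, hc₁def, mul_smul_comm, smul_mul_assoc, smul_sub]
    have hu₁ : ((u₁ : (CohenAlgebra R n)ˣ) : CohenAlgebra R n) = 1 + c₁ := by
      rw [hu₁def, Units.val_mul, Units.val_mul, Units.val_mul, hui, hu, xU_inv, xU_val, ← hb,
        mul_assoc, mul_assoc, comm_expand c b hcc hbb hcbc hbcb, hcb]
    have hu₁i : (((u₁⁻¹ : (CohenAlgebra R n)ˣ)) : CohenAlgebra R n) = 1 - c₁ := by
      have : u₁⁻¹ = (xU jj rr)⁻¹ * u⁻¹ * (xU jj rr) * u := by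
        rw [hu₁def]; group
      rw [this, Units.val_mul, Units.val_mul, Units.val_mul, hui, hu, xU_inv, xU_val, ← hb,
        mul_assoc, mul_assoc, comm_expand b c hbb hcc hbcb hcbc, ← hcb]
      abel
    have hc₁ : c₁ ∈ P i := by
      rw [hc₁def]
      exact Submodule.smul_mem _ _ (sub_mem (P_mul_right hc _) (P_mul_left hc _))
    have hstep : grpComm u (((jj, rr) :: l).map fun p => xU p.1 p.2)
        = grpComm u₁ (l.map fun p => xU p.1 p.2) := rfl
    have hfold : ((jj, rr) :: l).foldl (fun d p => p.2 • (d * ya R p.1 - ya R p.1 * d)) c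
        = l.foldl (fun d p => p.2 • (d * ya R p.1 - ya R p.1 * d)) c₁ := rfl
    rw [hstep, hfold]
    exact ih u₁ c₁ hu₁ hu₁i hc₁

lemma fold_smul (l : List (Fin n × R)) :
    ∀ (s : R) (d : CohenAlgebra R n),
    l.foldl (fun d p => p.2 • (d * ya R p.1 - ya R p.1 * d)) (s • d)
      = (s * (l.map Prod.snd).prod) • ringComm d (l.map fun p => ya R p.1) := by
  induction l with
  | nil => intro s d; simp [ringComm]
  | cons p l ih =>
    intro s d
    obtain ⟨jj, rr⟩ := p
    have h1 : rr • ((s • d) * ya R jj - ya R jj * (s • d))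
        = (rr * s) • (d * ya R jj - ya R jj * d) := by
      simp [smul_smul, smul_sub, smul_mul_assoc, mul_smul_comm, mul_comm]
    have h2 : ringComm d (((jj, rr) :: l).map fun p => ya R p.1)
        = ringComm (d * ya R jj - ya R jj * d) (l.map fun p => ya R p.1) := rfl
    rw [List.foldl_cons, h1, ih, h2]
    congr 1
    rw [List.map_cons, List.prod_cons]
    ring

lemma main_calc {t : ℕ} (j : Fin (t+1) → Fin n) (r : Fin (t+1) → R) :
    ((grpComm (xU (j 0) (r 0)) (List.ofFn fun s : Fin t => xU (j s.succ) (r s.succ)) :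
        (CohenAlgebra R n)ˣ) : CohenAlgebra R n)
      = 1 + (∏ s, r s) • ringComm (ya R (j 0)) (List.ofFn fun s : Fin t => ya R (j s.succ)) := by
  set l : List (Fin n × R) := List.ofFn fun s : Fin t => (j s.succ, r s.succ) with hl
  have hmap : (List.ofFn fun s : Fin t => xU (j s.succ) (r s.succ))
      = l.map fun p => xU p.1 p.2 := by rw [hl, List.map_ofFn]; rfl
  have h := (fold_comm (j 0) l (xU (j 0) (r 0)) (r 0 • ya R (j 0)) (xU_val _ _) (xU_inv _ _)
    (Submodule.smul_mem _ _ (ya_mem_P (j 0)))).1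
  rw [hmap, h, fold_smul l (r 0) (ya R (j 0))]
  congr 1
  rw [hl, List.map_ofFn, show (Prod.snd ∘ fun s : Fin t => (j s.succ, r s.succ))
      = fun s : Fin t => r s.succ from rfl, List.prod_ofFn, ← Fin.prod_univ_succ r,
    List.map_ofFn]
  rfl

theorem cohen_algebra_unit_commutators (R : Type u) [CommRing R] (n t : ℕ)
    (j : Fin (t+1) → Fin n) (r : Fin (t+1) → R) :
    -- each `1 + r_s • y_{j_s}` is a unit `x s`:
    ∃ x : Fin (t+1) → (CohenAlgebra R n)ˣ,
      (∀ s, ((x s : (CohenAlgebra R n)ˣ) : CohenAlgebra R n) = 1 + r s • ya R (j s)) ∧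
      -- (1) the iterated group commutator of the units:
      (((grpComm (x 0) (List.ofFn fun s : Fin t => x s.succ) : (CohenAlgebra R n)ˣ) :
          CohenAlgebra R n)
        = 1 + (∏ s, r s) •
            ringComm (ya R (j 0)) (List.ofFn fun s : Fin t => ya R (j s.succ))) ∧
      -- (2) with integer exponents `m_s`, where `m = m_1 ⋯ m_t`:
      (∀ m : Fin (t+1) → ℤ,
        ((grpComm (x 0 ^ (m 0)) (List.ofFn fun s : Fin t => x s.succ ^ (m s.succ)) :
            (CohenAlgebra R n)ˣ) : CohenAlgebra R n)
          = 1 + (∏ s, m s) • ((∏ s, r s) •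
              ringComm (ya R (j 0)) (List.ofFn fun s : Fin t => ya R (j s.succ)))) := by
  refine ⟨fun s => xU (j s) (r s), fun s => xU_val _ _, main_calc j r, ?_⟩
  intro m
  have hx : ∀ s, (xU (j s) (r s)) ^ (m s) = xU (j s) ((m s : R) * r s) := by
    intro s
    apply Units.ext
    rw [unit_zpow (xU_val _ _) (smul_ya_sq _ _), xU_val, ← Int.cast_smul_eq_zsmul R, smul_smul]
  have hlist : (List.ofFn fun s : Fin t => (xU (j s.succ) (r s.succ)) ^ (m s.succ))
      = List.ofFn fun s : Fin t => xU (j s.succ) ((m s.succ : R) * r s.succ) := by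
    congr 1; funext s; exact hx s.succ
  rw [hx 0, hlist, main_calc j (fun s => (m s : R) * r s)]
  congr 1
  rw [Finset.prod_mul_distrib, ← Int.cast_prod, mul_smul, Int.cast_smul_eq_zsmul]
end

section
/- Let R be a commutative ring with identity and n ≥ 1. The n projection homomorphisms p_j : K_n^R → K_{n−1}^R all restrict to one and the same homomorphism on the subgroup H_n^R, this common restriction takes values in H_{n−1}^R, and the resulting homomorphism d_n : H_n^R → H_{n−1}^R is surjective. -/
/-!
STATEMENT 3: For the Cohen group `K_n^R` and its projection homomorphisms
`p_j : K_n^R → K_{n-1}^R` (characterized on generators by `p_j(x_i^r) = x_i^r` for `i < j`,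
`p_j(x_j^r) = 1`, `p_j(x_i^r) = x_{i-1}^r` for `i > j`), the projections all agree on the
equalizer subgroup `H_n^R`, the common restriction takes values in `H_{n-1}^R`, and the
resulting homomorphism `d_n : H_n^R → H_{n-1}^R` is surjective.
-/

universe u

abbrev CohenFree (R : Type u) [CommRing R] (n : ℕ) : Type u :=
  Monoid.CoprodI (fun _ : Fin n => Multiplicative R)

noncomputable def kgen (R : Type u) [CommRing R] {n : ℕ} (i : Fin n) (r : R) :
    CohenFree R n :=
  Monoid.CoprodI.of (i := i) (Multiplicative.ofAdd r)

def cohenGrpRel (R : Type u) [CommRing R] (n : ℕ) : Set (CohenFree R n) :=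
  { w | (∃ (l : ℕ) (i : Fin (l+1) → Fin n) (r : Fin (l+1) → R) (s t : Fin (l+1)),
          s ≠ t ∧ i s = i t ∧
          w = grpComm (kgen R (i 0) (r 0))
            (List.ofFn fun s : Fin l => kgen R (i s.succ) (r s.succ)))
      ∨ (∃ (l : ℕ) (i : Fin (l+1) → Fin n) (r r' : Fin (l+1) → R),
          (∏ s, r s) = (∏ s, r' s) ∧
          w = grpComm (kgen R (i 0) (r 0))
              (List.ofFn fun s : Fin l => kgen R (i s.succ) (r s.succ)) *
            (grpComm (kgen R (i 0) (r' 0))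
              (List.ofFn fun s : Fin l => kgen R (i s.succ) (r' s.succ)))⁻¹) }

abbrev CohenGroup (R : Type u) [CommRing R] (n : ℕ) : Type u :=
  CohenFree R n ⧸ Subgroup.normalClosure (cohenGrpRel R n)

noncomputable def kx (R : Type u) [CommRing R] {n : ℕ} (i : Fin n) (r : R) :
    CohenGroup R n :=
  QuotientGroup.mk (kgen R i r)

/-- The defining property of the projection homomorphisms
`p_j : K_m^R → K_{m-1}^R` on generators. -/
def IsProjFamily (R : Type u) [CommRing R] (m : ℕ)
    (p : Fin m → (CohenGroup R m →* CohenGroup R (m-1))) : Prop :=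
  ∀ (j i : Fin m) (r : R),
    p j (kx R i r) =
      if h : (i : ℕ) < (j : ℕ) then kx R ⟨(i : ℕ), by have := j.is_lt; omega⟩ r
      else if h' : (i : ℕ) = (j : ℕ) then 1
      else kx R ⟨(i : ℕ) - 1, by have := i.is_lt; omega⟩ r

section CommLemmas
variable {G H : Type*} [Group G] [Group H]

lemma grpComm_cons (a b : G) (l : List G) :
    grpComm a (b :: l) = grpComm (a⁻¹ * b⁻¹ * a * b) l := rfl

lemma grpComm_one_left (l : List G) : grpComm (1 : G) l = 1 := by
  induction l with
  | nil => rfl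
  | cons b l ih => rw [grpComm_cons]; simpa using ih

lemma grpComm_eq_one_of_mem {l : List G} (h : (1 : G) ∈ l) (a : G) : grpComm a l = 1 := by
  induction l generalizing a with
  | nil => simp at h
  | cons b l ih =>
    rcases List.mem_cons.mp h with hb | hl
    · rw [grpComm_cons, ← hb]
      simpa using grpComm_one_left l
    · rw [grpComm_cons]; exact ih hl _

lemma grpComm_map (f : G →* H) (a : G) (l : List G) :
    f (grpComm a l) = grpComm (f a) (l.map f) := by
  induction l generalizing a with
  | nil => rfl
  | cons b l ih => rw [grpComm_cons, ih, List.map_cons, grpComm_cons]; simp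

end CommLemmas

section Maps
variable (R : Type u) [CommRing R]

/-- hom on the free product induced by a partial map on indices -/
noncomputable def fhom {m₁ m₂ : ℕ} (σ : Fin m₁ → Option (Fin m₂)) :
    CohenFree R m₁ →* CohenFree R m₂ :=
  Monoid.CoprodI.lift fun i => (σ i).elim 1 fun i' =>
    (Monoid.CoprodI.of (M := fun _ : Fin m₂ => Multiplicative R) (i := i'))

lemma fhom_kgen {m₁ m₂ : ℕ} (σ : Fin m₁ → Option (Fin m₂)) (i : Fin m₁) (r : R) :
    fhom R σ (kgen R i r) = (σ i).elim 1 fun i' => kgen R i' r := by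
  unfold fhom kgen
  rw [Monoid.CoprodI.lift_of]
  cases σ i <;> rfl

lemma fhom_comm {m₁ m₂ : ℕ} (σ : Fin m₁ → Option (Fin m₂)) {l : ℕ}
    (i : Fin (l+1) → Fin m₁) (r : Fin (l+1) → R) (i' : Fin (l+1) → Fin m₂)
    (hi : ∀ u, σ (i u) = some (i' u)) :
    fhom R σ (grpComm (kgen R (i 0) (r 0))
        (List.ofFn fun s : Fin l => kgen R (i s.succ) (r s.succ)))
      = grpComm (kgen R (i' 0) (r 0))
        (List.ofFn fun s : Fin l => kgen R (i' s.succ) (r s.succ)) := by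
  rw [grpComm_map, List.map_ofFn]
  congr 1
  · rw [fhom_kgen, hi 0]; rfl
  · refine congrArg List.ofFn (funext fun s => ?_)
    show fhom R σ (kgen R (i s.succ) (r s.succ)) = _
    rw [fhom_kgen, hi s.succ]; rfl

lemma fhom_comm_none {m₁ m₂ : ℕ} (σ : Fin m₁ → Option (Fin m₂)) {l : ℕ}
    (i : Fin (l+1) → Fin m₁) (r : Fin (l+1) → R) (hnone : ∃ u, σ (i u) = none) :
    fhom R σ (grpComm (kgen R (i 0) (r 0))
        (List.ofFn fun s : Fin l => kgen R (i s.succ) (r s.succ))) = 1 := by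
  rw [grpComm_map, List.map_ofFn]
  obtain ⟨u, hu⟩ := hnone
  rcases Fin.eq_zero_or_eq_succ u with rfl | ⟨t, rfl⟩
  · rw [fhom_kgen, hu]
    exact grpComm_one_left _
  · apply grpComm_eq_one_of_mem
    refine List.mem_ofFn.2 ⟨t, ?_⟩
    show fhom R σ (kgen R (i t.succ) (r t.succ)) = 1
    rw [fhom_kgen, hu]; rfl

lemma fhom_rel {m₁ m₂ : ℕ} (σ : Fin m₁ → Option (Fin m₂)) {w : CohenFree R m₁}
    (hw : w ∈ cohenGrpRel R m₁) :
    fhom R σ w ∈ Subgroup.normalClosure (cohenGrpRel R m₂) := by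
  rcases hw with ⟨l, i, r, s, t, hst, hit, rfl⟩ | ⟨l, i, r, r', hrr, rfl⟩
  · by_cases hc : ∀ u, ∃ v, σ (i u) = some v
    · choose i' hi' using hc
      rw [fhom_comm R σ i r i' hi']
      apply Subgroup.subset_normalClosure
      refine Or.inl ⟨l, i', r, s, t, hst, ?_, rfl⟩
      have : σ (i s) = σ (i t) := by rw [hit]
      rw [hi' s, hi' t] at this
      exact Option.some_injective _ this
    · push_neg at hc
      obtain ⟨u, hu⟩ := hc
      have hnone : σ (i u) = none := by
        cases h : σ (i u) with
        | none => rfl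
        | some v => exact absurd h (hu v)
      rw [fhom_comm_none R σ i r ⟨u, hnone⟩]
      exact one_mem _
  · rw [map_mul, map_inv]
    by_cases hc : ∀ u, ∃ v, σ (i u) = some v
    · choose i' hi' using hc
      rw [fhom_comm R σ i r i' hi', fhom_comm R σ i r' i' hi']
      apply Subgroup.subset_normalClosure
      exact Or.inr ⟨l, i', r, r', hrr, rfl⟩
    · push_neg at hc
      obtain ⟨u, hu⟩ := hc
      have hnone : σ (i u) = none := by
        cases h : σ (i u) with
        | none => rfl
        | some v => exact absurd h (hu v)
      rw [fhom_comm_none R σ i r ⟨u, hnone⟩, fhom_comm_none R σ i r' ⟨u, hnone⟩]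
      simpa using one_mem _

/-- induced hom on Cohen groups -/
noncomputable def qhom {m₁ m₂ : ℕ} (σ : Fin m₁ → Option (Fin m₂)) :
    CohenGroup R m₁ →* CohenGroup R m₂ :=
  QuotientGroup.lift _
    ((QuotientGroup.mk' (Subgroup.normalClosure (cohenGrpRel R m₂))).comp (fhom R σ))
    (by
      intro x hx
      have hsub : cohenGrpRel R m₁ ⊆
          (((QuotientGroup.mk' (Subgroup.normalClosure (cohenGrpRel R m₂))).comp
            (fhom R σ))).ker := by
        intro w hw
        have h2 : (fhom R σ) w ∈ Subgroup.normalClosure (cohenGrpRel R m₂) :=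
          fhom_rel R σ hw
        simpa [MonoidHom.mem_ker, QuotientGroup.eq_one_iff] using h2
      exact Subgroup.normalClosure_le_normal hsub hx)

lemma qhom_kx {m₁ m₂ : ℕ} (σ : Fin m₁ → Option (Fin m₂)) (i : Fin m₁) (r : R) :
    qhom R σ (kx R i r) = (σ i).elim 1 fun i' => kx R i' r := by
  show qhom R σ (QuotientGroup.mk (kgen R i r)) = _
  unfold qhom
  rw [QuotientGroup.lift_mk']
  simp only [MonoidHom.comp_apply, fhom_kgen]
  cases σ i <;> rfl

lemma chom_ext {m : ℕ} {M : Type*} [Monoid M] {f g : CohenGroup R m →* M}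
    (h : ∀ (i : Fin m) (r : R), f (kx R i r) = g (kx R i r)) : f = g := by
  apply QuotientGroup.monoidHom_ext
  apply Monoid.CoprodI.ext_hom
  intro i
  ext x
  exact h i (Multiplicative.toAdd x)

lemma qhom_comp {m₁ m₂ m₃ : ℕ} (σ : Fin m₂ → Option (Fin m₃)) (τ : Fin m₁ → Option (Fin m₂)) :
    (qhom R σ).comp (qhom R τ) = qhom R (fun i => (τ i).bind σ) := by
  apply chom_ext
  intro i r
  rw [MonoidHom.comp_apply, qhom_kx, qhom_kx]
  cases h : τ i with
  | none => simp
  | some v => simp [qhom_kx]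

lemma qhom_id {m : ℕ} : qhom R (fun i : Fin m => some i) = MonoidHom.id _ := by
  apply chom_ext
  intro i r
  rw [qhom_kx]
  rfl

end Maps

section Proj
variable (R : Type u) [CommRing R]

def psig (m j : ℕ) : Fin (m+1) → Option (Fin m) := fun i =>
  if h : (i : ℕ) < j ∧ (i : ℕ) < m then some ⟨(i : ℕ), h.2⟩
  else if h2 : (i : ℕ) ≤ j then none
  else some ⟨(i : ℕ) - 1, by have := i.isLt; omega⟩

def isig (m t : ℕ) : Fin m → Option (Fin (m+1)) := fun i =>
  if (i : ℕ) < t then some ⟨(i : ℕ), by have := i.isLt; omega⟩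
  else some ⟨(i : ℕ) + 1, by have := i.isLt; omega⟩

noncomputable def Pm (m j : ℕ) : CohenGroup R (m+1) →* CohenGroup R m :=
  qhom R (psig m j)

noncomputable def Im (m t : ℕ) : CohenGroup R m →* CohenGroup R (m+1) :=
  qhom R (isig m t)

lemma PP {m a b : ℕ} (hab : a < b) (hb : b ≤ m + 1) :
    (Pm R m a).comp (Pm R (m+1) b) = (Pm R m (b-1)).comp (Pm R (m+1) a) := by
  unfold Pm
  rw [qhom_comp, qhom_comp]
  refine congrArg _ (funext fun i => ?_)
  have hi := i.isLt
  simp only [psig, isig]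
  split_ifs <;>
    simp only [Option.bind_some, Option.bind_none, psig, isig] <;>
    split_ifs <;>
    first
      | rfl
      | (exfalso; omega)
      | (simp only [Option.some.injEq, Fin.mk.injEq]; omega)

lemma PI_eq {m t : ℕ} : (Pm R m t).comp (Im R m t) = MonoidHom.id _ := by
  unfold Pm Im
  rw [qhom_comp, ← qhom_id R]
  refine congrArg _ (funext fun i => ?_)
  have hi := i.isLt
  simp only [psig, isig]
  split_ifs <;>
    simp only [Option.bind_some, Option.bind_none, psig, isig] <;>
    split_ifs <;>
    first
      | rfl
      | (exfalso; omega)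
      | (simp only [Option.some.injEq, Fin.mk.injEq]; omega)

lemma PI_lt {m j t : ℕ} (hjt : j < t) (ht : t ≤ m + 1) (hj : j ≤ m) :
    (Pm R (m+1) j).comp (Im R (m+1) t) = (Im R m (t-1)).comp (Pm R m j) := by
  unfold Pm Im
  rw [qhom_comp, qhom_comp]
  refine congrArg _ (funext fun i => ?_)
  have hi := i.isLt
  simp only [psig, isig]
  split_ifs <;>
    simp only [Option.bind_some, Option.bind_none, psig, isig] <;>
    split_ifs <;>
    first
      | rfl
      | (exfalso; omega)
      | (simp only [Option.some.injEq, Fin.mk.injEq]; omega)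

lemma PI_gt {m j t : ℕ} (htj : t < j) (hj : j ≤ m + 1) :
    (Pm R (m+1) j).comp (Im R (m+1) t) = (Im R m t).comp (Pm R m (j-1)) := by
  unfold Pm Im
  rw [qhom_comp, qhom_comp]
  refine congrArg _ (funext fun i => ?_)
  have hi := i.isLt
  simp only [psig, isig]
  split_ifs <;>
    simp only [Option.bind_some, Option.bind_none, psig, isig] <;>
    split_ifs <;>
    first
      | rfl
      | (exfalso; omega)
      | (simp only [Option.some.injEq, Fin.mk.injEq]; omega)

end Proj

section Lift
variable (R : Type u) [CommRing R]

lemma hom_comp_apply {A B B' C : Type*} [Group A] [Group B] [Group B'] [Group C]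
    {f : B →* C} {g : A →* B} {f' : B' →* C} {g' : A →* B'}
    (h : f.comp g = f'.comp g') (x : A) :
    f (g x) = f' (g' x) := by
  simpa using DFunLike.congr_fun h x

lemma PI_eq_apply {m t : ℕ} (x : CohenGroup R m) : Pm R m t (Im R m t x) = x := by
  simpa using DFunLike.congr_fun (PI_eq R (m := m) (t := t)) x

lemma corr (m : ℕ) : ∀ (k s : ℕ), m + 2 ≤ s + k → 1 ≤ s →
    ∀ D : CohenGroup R (m+1),
    (∀ a : ℕ, a < s → a ≤ m → Pm R m a D = 1) →
    (∀ a b : ℕ, s ≤ a → s ≤ b → a ≤ m → b ≤ m → Pm R m a D = Pm R m b D) →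
    ∃ c : CohenGroup R (m+2),
      (∀ j : ℕ, j < s → j ≤ m + 1 → Pm R (m+1) j c = 1) ∧
      (∀ j : ℕ, s ≤ j → j ≤ m + 1 → Pm R (m+1) j c = D) := by
  intro k
  induction k with
  | zero =>
    intro s hs _ D _ _
    exact ⟨1, fun j _ _ => map_one _, fun j hsj hjm => by omega⟩
  | succ k ih =>
    intro s hs hs1 D h1 h2
    rcases lt_trichotomy s (m+1) with hsm | hsm | hsm
    · -- s ≤ m : recursive step
      have hsm' : s ≤ m := by omega
      obtain ⟨mm, rfl⟩ : ∃ mm, m = mm + 1 := ⟨m - 1, by omega⟩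
      set Dstar := Pm R (mm+1) s D with hDstar
      set Dhat := (Im R (mm+1) s Dstar)⁻¹ * D with hDhat
      -- face values of Dstar
      have hDs1 : ∀ a : ℕ, a < s → a ≤ mm → Pm R mm a Dstar = 1 := by
        intro a has hamm
        rw [hDstar, hom_comp_apply (PP R (show a < s by omega) (show s ≤ mm + 1 by omega)) D,
          h1 a has (by omega), map_one]
      have hDsc : ∀ a : ℕ, s ≤ a → a ≤ mm → Pm R mm a Dstar = Pm R mm s Dstar := by
        intro a hsa hamm
        have e := hom_comp_apply (PP R (show s < a + 1 by omega) (show a + 1 ≤ mm + 1 by omega)) D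
        simp only [Nat.add_sub_cancel] at e
        rw [hDstar, ← e, h2 (a+1) s (by omega) (by omega) (by omega) (by omega)]
      -- hypotheses for Dhat
      have hh1 : ∀ a : ℕ, a < s + 1 → a ≤ mm + 1 → Pm R (mm+1) a Dhat = 1 := by
        intro a has ham
        rcases lt_or_eq_of_le (show a ≤ s by omega) with hlt | rfl
        · rw [hDhat, map_mul, map_inv,
            hom_comp_apply (PI_lt R hlt (show s ≤ mm + 1 by omega) (show a ≤ mm by omega)) Dstar,
            hDs1 a hlt (by omega), map_one, h1 a hlt (by omega)]
          simp
        · rw [hDhat, map_mul, map_inv, PI_eq_apply, hDstar]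
          simp
      have hh2 : ∀ a b : ℕ, s + 1 ≤ a → s + 1 ≤ b → a ≤ mm + 1 → b ≤ mm + 1 →
          Pm R (mm+1) a Dhat = Pm R (mm+1) b Dhat := by
        have key : ∀ a : ℕ, s + 1 ≤ a → a ≤ mm + 1 →
            Pm R (mm+1) a Dhat = (Im R mm s (Pm R mm s Dstar))⁻¹ * Dstar := by
          intro a hsa ham
          rw [hDhat, map_mul, map_inv,
            hom_comp_apply (PI_gt R (show s < a by omega) ham) Dstar,
            hDsc (a-1) (by omega) (by omega),
            h2 a s (by omega) (by omega) (by omega) (by omega)]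
        intro a b ha hb ham hbm
        rw [key a ha ham, key b hb hbm]
      obtain ⟨c', hc1, hc2⟩ := ih (s+1) (by omega) (by omega) Dhat hh1 hh2
      refine ⟨Im R (mm+2) s D * c', ?_, ?_⟩
      · intro j hj hjm
        rw [map_mul, hom_comp_apply (PI_lt R hj (show s ≤ mm + 2 by omega) (show j ≤ mm + 1 by omega)) D,
          h1 j hj (by omega), map_one, hc1 j (by omega) hjm, one_mul]
      · intro j hsj hjm
        rcases lt_or_eq_of_le hsj with hlt | rfl
        · rw [map_mul, hom_comp_apply (PI_gt R hlt hjm) D,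
            h2 (j-1) s (by omega) (by omega) (by omega) (by omega),
            hc2 j (by omega) hjm, hDhat, ← hDstar]
          group
        · rw [map_mul, PI_eq_apply, hc1 s (by omega) hjm, mul_one]
    · -- s = m + 1
      subst hsm
      refine ⟨Im R (m+1) (m+1) D, ?_, ?_⟩
      · intro j hj hjm
        rw [hom_comp_apply (PI_lt R (show j < m + 1 by omega) (le_refl (m+1))
          (show j ≤ m by omega)) D, h1 j hj (by omega), map_one]
      · intro j hsj hjm
        have hj : j = m + 1 := by omega
        subst hj
        exact PI_eq_apply R D
    · -- s ≥ m + 2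
      exact ⟨1, fun j _ _ => map_one _, fun j hsj hjm => by omega⟩

end Lift

section Assemble
variable (R : Type u) [CommRing R]

lemma lift_exists (m : ℕ) (h : CohenGroup R (m+1))
    (hh : ∀ a b : ℕ, a ≤ m → b ≤ m → Pm R m a h = Pm R m b h) :
    ∃ g : CohenGroup R (m+2), ∀ j : ℕ, j ≤ m + 1 → Pm R (m+1) j g = h := by
  set h' := Pm R m 0 h with hh'
  set D := (Im R m 0 h')⁻¹ * h with hD
  have h1 : ∀ a : ℕ, a < 1 → a ≤ m → Pm R m a D = 1 := by
    intro a ha _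
    have ha0 : a = 0 := by omega
    subst ha0
    rw [hD, map_mul, map_inv, PI_eq_apply, hh']
    simp
  have h2 : ∀ a b : ℕ, 1 ≤ a → 1 ≤ b → a ≤ m → b ≤ m → Pm R m a D = Pm R m b D := by
    rcases Nat.eq_zero_or_pos m with rfl | hm
    · intro a b ha hb ham; omega
    obtain ⟨mm, rfl⟩ : ∃ mm, m = mm + 1 := ⟨m - 1, by omega⟩
    have keyv : ∀ a : ℕ, 1 ≤ a → a ≤ mm + 1 →
        Pm R (mm+1) a D = (Im R mm 0 (Pm R mm 0 (Pm R (mm+1) 1 h)))⁻¹ * Pm R (mm+1) 1 h := by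
      intro a ha ham
      have e := hom_comp_apply (PP R (show 0 < a by omega) (show a ≤ mm + 1 by omega)) h
      rw [hD, map_mul, map_inv, hom_comp_apply (PI_gt R (show 0 < a by omega) ham) h', hh', ← e,
        hh a 1 (by omega) (by omega)]
    intro a b ha hb ham hbm
    rw [keyv a ha ham, keyv b hb hbm]
  obtain ⟨c, hc1, hc2⟩ := corr R m (m+1) 1 (by omega) (by omega) D h1 h2
  refine ⟨Im R (m+1) 0 h * c, ?_⟩
  intro j hjm
  rcases Nat.eq_zero_or_pos j with rfl | hj
  · rw [map_mul, PI_eq_apply, hc1 0 (by omega) (by omega), mul_one]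
  · rw [map_mul, hom_comp_apply (PI_gt R (show 0 < j by omega) hjm) h,
      hh (j-1) 0 (by omega) (by omega), hc2 j (by omega) hjm, hD, ← hh']
    group

lemma cohenFree_zero_eq_one (x : CohenFree R 0) : x = 1 := by
  induction x using Monoid.CoprodI.induction_on with
  | one => rfl
  | of i m => exact i.elim0
  | mul x y hx hy => rw [hx, hy, one_mul]

lemma cohenGroup_zero_eq_one (x : CohenGroup R 0) : x = 1 := by
  obtain ⟨y, rfl⟩ := QuotientGroup.mk_surjective x
  rw [cohenFree_zero_eq_one R y]
  rfl

lemma isProj (m : ℕ) : IsProjFamily R (m+1) (fun j : Fin (m+1) => Pm R m (j : ℕ)) := by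
  intro j i r
  have hj := j.isLt
  have hi := i.isLt
  show qhom R (psig m (j : ℕ)) (kx R i r) = _
  rw [qhom_kx]
  simp only [psig]
  split_ifs <;> first | rfl | (exfalso; omega)

end Assemble

theorem cohen_group_equalizer_projection_surjective (R : Type u) [CommRing R]
    (n : ℕ) (hn : 1 ≤ n) :
    ∃ p : Fin n → (CohenGroup R n →* CohenGroup R (n-1)), IsProjFamily R n p ∧
    ∃ q : Fin (n-1) → (CohenGroup R (n-1) →* CohenGroup R (n-1-1)), IsProjFamily R (n-1) q ∧
      -- the projections `p_j` all agree on `H_n^R = {g | ∀ j j', p_j g = p_{j'} g}` (by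
      -- definition), their common restriction takes values in `H_{n-1}^R`:
      (∀ g : CohenGroup R n, (∀ j j' : Fin n, p j g = p j' g) →
        ∀ j₀ : Fin n, ∀ j j' : Fin (n-1), q j (p j₀ g) = q j' (p j₀ g)) ∧
      -- and the resulting homomorphism `d_n : H_n^R → H_{n-1}^R` is surjective:
      (∀ h : CohenGroup R (n-1), (∀ j j' : Fin (n-1), q j h = q j' h) →
        ∃ g : CohenGroup R n, (∀ j j' : Fin n, p j g = p j' g) ∧ ∀ j : Fin n, p j g = h) := by
  obtain ⟨m, rfl⟩ : ∃ m, n = m + 1 := ⟨n - 1, by omega⟩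
  refine ⟨fun j : Fin (m+1) => Pm R m (j : ℕ), isProj R m, ?_⟩
  rcases Nat.eq_zero_or_pos m with rfl | hm
  · refine ⟨fun j => j.elim0, fun j => j.elim0, fun g hg j0 j j' => j.elim0, ?_⟩
    intro h _
    refine ⟨1, fun j j' => by rw [map_one, map_one], fun j => ?_⟩
    rw [map_one]
    exact (cohenGroup_zero_eq_one R h).symm
  · obtain ⟨mm, rfl⟩ : ∃ mm, m = mm + 1 := ⟨m - 1, by omega⟩
    refine ⟨fun j : Fin (mm+1) => Pm R mm (j : ℕ), isProj R mm, ?_, ?_⟩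
    · intro g hg j0 j j'
      have hgN : ∀ a b : ℕ, a ≤ mm + 1 → b ≤ mm + 1 →
          Pm R (mm+1) a g = Pm R (mm+1) b g := by
        intro a b ha hb
        exact hg ⟨a, by omega⟩ ⟨b, by omega⟩
      have main : ∀ a b : ℕ, a ≤ mm → b ≤ mm → a < b →
          Pm R mm a (Pm R (mm+1) (j0 : ℕ) g) = Pm R mm b (Pm R (mm+1) (j0 : ℕ) g) := by
        intro a b ha hb hab
        have hj0 := j0.isLt
        have e1 : Pm R (mm+1) (j0 : ℕ) g = Pm R (mm+1) a g :=
          hgN _ _ (by omega) (by omega)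
        have e2 := hom_comp_apply (PP R (show a < b + 1 by omega)
          (show b + 1 ≤ mm + 1 by omega)) g
        simp only [Nat.add_sub_cancel] at e2
        calc Pm R mm a (Pm R (mm+1) (j0 : ℕ) g)
            = Pm R mm a (Pm R (mm+1) (b+1) g) := by
              rw [hgN (j0 : ℕ) (b+1) (by omega) (by omega)]
          _ = Pm R mm b (Pm R (mm+1) a g) := e2
          _ = Pm R mm b (Pm R (mm+1) (j0 : ℕ) g) := by rw [← e1]
      have hj := j.isLt
      have hj' := j'.isLt
      rcases lt_trichotomy (j : ℕ) (j' : ℕ) with hlt | heq | hgt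
      · exact main (j : ℕ) (j' : ℕ) (by omega) (by omega) hlt
      · exact congrArg (fun t => Pm R mm t (Pm R (mm+1) (j0 : ℕ) g)) heq
      · exact (main (j' : ℕ) (j : ℕ) (by omega) (by omega) hgt).symm
    · intro h hq
      have hqN : ∀ a b : ℕ, a ≤ mm → b ≤ mm → Pm R mm a h = Pm R mm b h := by
        intro a b ha hb
        exact hq ⟨a, by omega⟩ ⟨b, by omega⟩
      obtain ⟨g, hgj⟩ := lift_exists R mm h hqN
      refine ⟨g, fun j j' => ?_, fun j => hgj (j : ℕ) (by have := j.isLt; omega)⟩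
      exact (hgj (j : ℕ) (by have := j.isLt; omega)).trans
        (hgj (j' : ℕ) (by have := j'.isLt; omega)).symm
end

section
/- Let R be a commutative ring with identity and let V̄ be the free R-module with basis x_1,…,x_n. Inside the tensor algebra T(V̄), let γ_n^R ⊆ V̄^{⊗n} be the R-submodule spanned by the products x_{σ(1)} x_{σ(2)} ⋯ x_{σ(n)} for σ ∈ Σ_n, and let Lie^R(n) be the R-submodule spanned by the left-normed iterated ring commutators [[x_{σ(1)},x_{σ(2)}],…,x_{σ(n)}] for σ ∈ Σ_n. Then γ_n^R ∩ P_n(T(V̄)) = Lie^R(n), where P_n(T(V̄)) denotes the set of primitive elements of T(V̄) of tensor length n. -/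
/-!
STATEMENT 4: Let `V̄` be the free `R`-module with basis `x_1,…,x_n` (so its tensor algebra is
the free associative algebra `FreeAlgebra R (Fin n)`), let `γ_n^R` be the span of the products
`x_{σ(1)} ⋯ x_{σ(n)}` (`σ ∈ Σ_n`) and `Lie^R(n)` the span of the left-normed iterated
commutators `[[x_{σ(1)},x_{σ(2)}],…,x_{σ(n)}]`.  Then
`γ_n^R ∩ P_n(T(V̄)) = Lie^R(n)`, where the primitive elements are those `x` with
`ψ(x) = x ⊗ 1 + 1 ⊗ x` for the standard comultiplication `ψ` (note that `γ_n^R` consists of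
elements of tensor length `n`, so intersecting it with all primitives is the same as
intersecting it with the primitives of tensor length `n`).
-/

universe u

open TensorProduct

/-- The comultiplication of the tensor algebra on `V̄`, determined by making the generators
primitive. -/
noncomputable def psiFree (R : Type u) [CommRing R] (n : ℕ) :
    FreeAlgebra R (Fin n) →ₐ[R] (FreeAlgebra R (Fin n)) ⊗[R] (FreeAlgebra R (Fin n)) :=
  FreeAlgebra.lift R (fun i => FreeAlgebra.ι R i ⊗ₜ[R] 1 + 1 ⊗ₜ[R] FreeAlgebra.ι R i)

namespace Stmt4

variable {R : Type u} [CommRing R] {n : ℕ}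

/-- the monomial attached to a word -/
noncomputable def M (R : Type u) [CommRing R] {n : ℕ} (w : List (Fin n)) :
    FreeAlgebra R (Fin n) := (w.map (FreeAlgebra.ι R)).prod

@[simp] lemma M_nil : M R ([] : List (Fin n)) = 1 := rfl

@[simp] lemma M_cons (a : Fin n) (w : List (Fin n)) :
    M R (a :: w) = FreeAlgebra.ι R a * M R w := by
  simp [M]

lemma M_append (v w : List (Fin n)) : M R (v ++ w) = M R v * M R w := by
  simp [M]

noncomputable def ee : FreeAlgebra R (Fin n) ≃ₐ[R] MonoidAlgebra R (FreeMonoid (Fin n)) :=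
  FreeAlgebra.equivMonoidAlgebraFreeMonoid

@[simp] lemma ee_ι (a : Fin n) :
    (ee (FreeAlgebra.ι R a) : MonoidAlgebra R (FreeMonoid (Fin n)))
      = MonoidAlgebra.single (FreeMonoid.of a) 1 := by
  simp [ee, FreeAlgebra.equivMonoidAlgebraFreeMonoid, MonoidAlgebra.of_apply]

lemma ee_M (w : List (Fin n)) :
    ee (M R w) = MonoidAlgebra.single (FreeMonoid.ofList w) 1 := by
  induction w with
  | nil => simp [MonoidAlgebra.one_def]
  | cons a w ih =>
      rw [M_cons, map_mul, ee_ι, ih, MonoidAlgebra.single_mul_single, one_mul,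
        ← FreeMonoid.ofList_cons]

/-- coefficient of word `u` -/
noncomputable def coeff (u : List (Fin n)) : FreeAlgebra R (Fin n) →ₗ[R] R where
  toFun x := (ee x : MonoidAlgebra R (FreeMonoid (Fin n))).coeff (FreeMonoid.ofList u)
  map_add' x y := by
    simp only [map_add]; exact Finsupp.add_apply _ _ _
  map_smul' r x := by
    simp only [map_smul, RingHom.id_apply]
    exact Finsupp.smul_apply _ _ _

lemma coeff_M (u v : List (Fin n)) :
    coeff u (M R v) = if v = u then 1 else 0 := by
  show (ee (M R v) : MonoidAlgebra R (FreeMonoid (Fin n))).coeff (FreeMonoid.ofList u)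
      = if v = u then 1 else 0
  rw [ee_M]
  rcases eq_or_ne v u with h | h
  · subst h; rw [if_pos rfl]; exact Finsupp.single_eq_same
  · rw [if_neg h]; exact Finsupp.single_eq_of_ne (FreeMonoid.ofList.injective.ne h.symm)

end Stmt4

namespace Stmt4

variable {R : Type u} [CommRing R] {n : ℕ}

def IsPrim (x : FreeAlgebra R (Fin n)) : Prop :=
  psiFree R n x = x ⊗ₜ[R] 1 + 1 ⊗ₜ[R] x

@[simp] lemma psiFree_ι (a : Fin n) :
    psiFree R n (FreeAlgebra.ι R a)
      = FreeAlgebra.ι R a ⊗ₜ[R] 1 + 1 ⊗ₜ[R] FreeAlgebra.ι R a := by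
  simp [psiFree]

lemma isPrim_ι (a : Fin n) : IsPrim (FreeAlgebra.ι R a) := psiFree_ι a

lemma IsPrim.zero : IsPrim (0 : FreeAlgebra R (Fin n)) := by
  simp [IsPrim]

lemma IsPrim.add {x y : FreeAlgebra R (Fin n)} (hx : IsPrim x) (hy : IsPrim y) :
    IsPrim (x + y) := by
  unfold IsPrim at *
  rw [map_add, hx, hy, TensorProduct.add_tmul, TensorProduct.tmul_add]
  abel

lemma IsPrim.smul (r : R) {x : FreeAlgebra R (Fin n)} (hx : IsPrim x) : IsPrim (r • x) := by
  unfold IsPrim at *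
  rw [map_smul, hx, smul_add, TensorProduct.smul_tmul', TensorProduct.tmul_smul]

lemma IsPrim.sub {x y : FreeAlgebra R (Fin n)} (hx : IsPrim x) (hy : IsPrim y) :
    IsPrim (x - y) := by
  simpa [sub_eq_add_neg] using hx.add (hy.smul (-1))

lemma IsPrim.comm {x y : FreeAlgebra R (Fin n)} (hx : IsPrim x) (hy : IsPrim y) :
    IsPrim (x * y - y * x) := by
  unfold IsPrim at *
  rw [map_sub, map_mul, map_mul, hx, hy]
  rw [add_mul, mul_add, mul_add, add_mul, mul_add, mul_add]
  simp only [Algebra.TensorProduct.tmul_mul_tmul, one_mul, mul_one]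
  rw [TensorProduct.sub_tmul, TensorProduct.tmul_sub]
  abel

lemma IsPrim.ringComm {x : FreeAlgebra R (Fin n)} (hx : IsPrim x)
    (l : List (FreeAlgebra R (Fin n))) (hl : ∀ y ∈ l, IsPrim y) :
    IsPrim (ringComm x l) := by
  induction l generalizing x with
  | nil => exact hx
  | cons b t ih =>
      exact ih (hx.comm (hl b List.mem_cons_self))
        (fun y hy => hl y (List.mem_cons_of_mem _ hy))

end Stmt4

namespace Stmt4

variable {R : Type u} [CommRing R] {n : ℕ}

/-- span of monomials of words equivalent to `w` up to permutation -/
noncomputable def SP (R : Type u) [CommRing R] {n : ℕ} (w : List (Fin n)) :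
    Submodule R (FreeAlgebra R (Fin n)) :=
  Submodule.span R {x | ∃ v : List (Fin n), v.Perm w ∧ x = M R v}

lemma SP_congr {w w' : List (Fin n)} (h : w.Perm w') : SP R w = SP R w' := by
  unfold SP
  congr 1
  ext x
  exact ⟨fun ⟨v, hv, hx⟩ => ⟨v, hv.trans h, hx⟩, fun ⟨v, hv, hx⟩ => ⟨v, hv.trans h.symm, hx⟩⟩

lemma M_mem_SP {v w : List (Fin n)} (h : v.Perm w) : M R v ∈ SP R w :=
  Submodule.subset_span ⟨v, h, rfl⟩

lemma comm_mem_SP {w : List (Fin n)} {x : FreeAlgebra R (Fin n)} (hx : x ∈ SP R w)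
    (a : Fin n) :
    x * FreeAlgebra.ι R a - FreeAlgebra.ι R a * x ∈ SP R (w ++ [a]) := by
  set T : FreeAlgebra R (Fin n) →ₗ[R] FreeAlgebra R (Fin n) :=
    LinearMap.mulRight R (FreeAlgebra.ι R a) - LinearMap.mulLeft R (FreeAlgebra.ι R a) with hT
  have : x ∈ Submodule.comap T (SP R (w ++ [a])) := by
    refine Submodule.span_le.mpr ?_ hx
    rintro y ⟨v, hv, rfl⟩
    refine Submodule.mem_comap.mpr ?_
    have hTv : T (M R v) = M R (v ++ [a]) - M R (a :: v) := by
      simp only [hT, LinearMap.sub_apply, LinearMap.mulRight_apply, LinearMap.mulLeft_apply]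
      rw [M_append, M_cons, M_cons, M_nil, mul_one]
    rw [hTv]
    have hp1 : (v ++ [a]).Perm (w ++ [a]) := hv.append_right [a]
    have hp2 : (a :: v).Perm (w ++ [a]) := by
      refine List.Perm.trans ?_ hp1
      simpa using (List.perm_append_comm (l₁ := [a]) (l₂ := v))
    exact sub_mem (M_mem_SP hp1) (M_mem_SP hp2)
  simpa [hT] using this

lemma ringComm_mem_SP (l : List (Fin n)) :
    ∀ (w : List (Fin n)) (x : FreeAlgebra R (Fin n)), x ∈ SP R w →
      ringComm x (l.map (FreeAlgebra.ι R)) ∈ SP R (w ++ l) := by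
  induction l with
  | nil => intro w x hx; simpa [ringComm] using hx
  | cons a t ih =>
      intro w x hx
      have : ringComm x ((a :: t).map (FreeAlgebra.ι R))
          = ringComm (x * FreeAlgebra.ι R a - FreeAlgebra.ι R a * x)
              (t.map (FreeAlgebra.ι R)) := rfl
      rw [this]
      have := ih (w ++ [a]) _ (comm_mem_SP hx a)
      rw [List.append_assoc] at this; simpa using this

end Stmt4

namespace Stmt4

variable {R : Type u} [CommRing R] {n : ℕ}

noncomputable def gammaSub (R : Type u) [CommRing R] (n : ℕ) :
    Submodule R (FreeAlgebra R (Fin n)) :=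
  Submodule.span R (Set.range fun σ : Equiv.Perm (Fin n) => M R (List.ofFn σ))

noncomputable def primSub (R : Type u) [CommRing R] (n : ℕ) :
    Submodule R (FreeAlgebra R (Fin n)) where
  carrier := {x | IsPrim x}
  add_mem' hx hy := hx.add hy
  zero_mem' := IsPrim.zero
  smul_mem' r x hx := hx.smul r

lemma SP_ofFn_le_gamma (σ : Equiv.Perm (Fin n)) : SP R (List.ofFn σ) ≤ gammaSub R n := by
  refine Submodule.span_le.mpr ?_
  rintro x ⟨v, hv, rfl⟩
  have hlen : v.length = n := by simpa using hv.length_eq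
  have hnd : v.Nodup := hv.nodup_iff.mpr (List.nodup_ofFn.mpr σ.injective)
  have hinj : Function.Injective (fun i : Fin n => v.get (Fin.cast hlen.symm i)) := by
    intro i j hij
    have := (List.nodup_iff_injective_get.mp hnd) hij
    exact Fin.cast_injective _ this
  let τ : Equiv.Perm (Fin n) := Equiv.ofBijective _ (Finite.injective_iff_bijective.mp hinj)
  have hv' : List.ofFn τ = v := by
    refine List.ext_getElem (by simpa using hlen.symm) ?_
    intro i h1 h2
    simp [τ, Equiv.ofBijective, List.getElem_ofFn]
  exact Submodule.subset_span ⟨τ, by simp only []; rw [hv']⟩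

lemma lieGen_mem_SP (hn : 1 ≤ n) (σ : Equiv.Perm (Fin n)) :
    ringComm (FreeAlgebra.ι R (σ ⟨0, hn⟩))
      (List.ofFn fun s : Fin (n-1) =>
        FreeAlgebra.ι R (σ ⟨(s : ℕ) + 1, by omega⟩))
      ∈ SP R (List.ofFn σ) := by
  obtain ⟨m, rfl⟩ : ∃ m : ℕ, n = m + 1 := ⟨n - 1, by omega⟩
  have hl : (List.ofFn fun s : Fin (m+1-1) =>
      FreeAlgebra.ι R (σ ⟨(s : ℕ) + 1, by omega⟩))
      = (List.ofFn fun s : Fin m => σ s.succ).map (FreeAlgebra.ι R) := by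
    rw [List.map_ofFn]
    rfl
  rw [hl]
  have h0 : (⟨0, hn⟩ : Fin (m+1)) = 0 := rfl
  have hbase : FreeAlgebra.ι R (σ ⟨0, hn⟩) ∈ SP R [σ ⟨0, hn⟩] := by
    have := M_mem_SP (R := R) (List.Perm.refl [σ ⟨0, hn⟩])
    simpa using this
  have := ringComm_mem_SP (List.ofFn fun s : Fin m => σ s.succ) _ _ hbase
  have heq : ([σ ⟨0, hn⟩] ++ List.ofFn fun s : Fin m => σ s.succ) = List.ofFn σ := by
    rw [List.ofFn_succ]
    simp [h0]
  rwa [heq] at this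

end Stmt4

namespace Stmt4

variable {R : Type u} [CommRing R] {n : ℕ}

lemma coeff_ι_mul (a : Fin n) (u : List (Fin n)) (y : FreeAlgebra R (Fin n)) :
    coeff u (FreeAlgebra.ι R a * y)
      = if u.head? = some a then coeff u.tail y else 0 := by
  show (ee (FreeAlgebra.ι R a * y) : MonoidAlgebra R (FreeMonoid (Fin n))).coeff
      (FreeMonoid.ofList u) = _
  rw [map_mul, ee_ι]
  cases u with
  | nil =>
      rw [MonoidAlgebra.single_mul_apply_of_not_exists_mul]
      · simp
      · rintro ⟨d, hd⟩
        have := congrArg FreeMonoid.toList hd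
        simp [FreeMonoid.toList_of_mul] at this
  | cons b u' =>
      by_cases hba : b = a
      · subst hba
        rw [MonoidAlgebra.single_mul_apply_aux (m₂ := FreeMonoid.ofList u')]
        · simp [coeff]
        · intro c _
          constructor
          · intro hc
            have := congrArg FreeMonoid.toList hc
            rw [FreeMonoid.toList_of_mul] at this
            have : FreeMonoid.toList c = u' := by
              simpa using this
            exact FreeMonoid.toList.injective (by simpa using this)
          · rintro rfl
            rfl
      · rw [MonoidAlgebra.single_mul_apply_of_not_exists_mul]
        · simp [hba]
        · rintro ⟨d, hd⟩
          have := congrArg FreeMonoid.toList hd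
          rw [FreeMonoid.toList_of_mul] at this
          simp only [FreeMonoid.toList_ofList, List.cons.injEq] at this
          exact hba this.1

lemma coeff_mul_ι_append (b : Fin n) (u : List (Fin n)) (y : FreeAlgebra R (Fin n)) :
    coeff (u ++ [b]) (y * FreeAlgebra.ι R b) = coeff u y := by
  show (ee (y * FreeAlgebra.ι R b) : MonoidAlgebra R (FreeMonoid (Fin n))).coeff
      (FreeMonoid.ofList (u ++ [b])) = _
  rw [map_mul, ee_ι]
  rw [MonoidAlgebra.mul_single_apply_aux (m₂ := FreeMonoid.ofList u)]
  · simp [coeff]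
  · intro c _
    constructor
    · intro hc
      have := congrArg FreeMonoid.toList hc
      simp only [FreeMonoid.toList_mul, FreeMonoid.toList_of, FreeMonoid.toList_ofList] at this
      exact FreeMonoid.toList.injective (by simpa [List.append_left_inj] using this)
    · rintro rfl
      rfl

lemma coeff_mul_ι_zero (b : Fin n) (u : List (Fin n))
    (h : ¬∃ u₀ : List (Fin n), u = u₀ ++ [b]) (y : FreeAlgebra R (Fin n)) :
    coeff u (y * FreeAlgebra.ι R b) = 0 := by
  show (ee (y * FreeAlgebra.ι R b) : MonoidAlgebra R (FreeMonoid (Fin n))).coeff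
      (FreeMonoid.ofList u) = 0
  rw [map_mul, ee_ι]
  rw [MonoidAlgebra.mul_single_apply_of_not_exists_mul]
  rintro ⟨d, hd⟩
  have := congrArg FreeMonoid.toList hd
  simp only [FreeMonoid.toList_mul, FreeMonoid.toList_of, FreeMonoid.toList_ofList] at this
  exact h ⟨FreeMonoid.toList d, this⟩

end Stmt4

namespace Stmt4

variable {R : Type u} [CommRing R] {n : ℕ}

lemma ringComm_append (x : FreeAlgebra R (Fin n)) (t : List (FreeAlgebra R (Fin n)))
    (b : FreeAlgebra R (Fin n)) :
    ringComm x (t ++ [b]) = ringComm x t * b - b * ringComm x t := by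
  simp [ringComm, List.foldl_append]

lemma coeff_ringComm (a : Fin n) (l : List (Fin n)) (ha : a ∉ l) (u : List (Fin n)) :
    coeff (a :: u) (ringComm (FreeAlgebra.ι R a) (l.map (FreeAlgebra.ι R)))
      = if u = l then 1 else 0 := by
  induction l using List.reverseRecOn generalizing u with
  | nil =>
      show coeff (a :: u) (FreeAlgebra.ι R a) = _
      have hM : FreeAlgebra.ι R a = M R [a] := by simp
      rw [hM, coeff_M]
      rcases u with _ | ⟨c, u'⟩ <;> simp
  | append_singleton l' b ih =>
      have hanotl' : a ∉ l' := fun h => ha (List.mem_append_left _ h)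
      have hab : a ≠ b := fun h => ha (by simp [h])
      rw [List.map_append, List.map_singleton, ringComm_append, map_sub]
      rw [coeff_ι_mul]
      simp only [List.head?_cons, Option.some.injEq]
      rw [if_neg (fun h => hab h), sub_zero]
      by_cases h : ∃ u₀ : List (Fin n), u = u₀ ++ [b]
      · obtain ⟨u₀, rfl⟩ := h
        have : a :: (u₀ ++ [b]) = (a :: u₀) ++ [b] := rfl
        rw [this, coeff_mul_ι_append, ih hanotl']
        by_cases h2 : u₀ = l'
        · subst h2; simp
        · rw [if_neg h2, if_neg (by simpa [List.append_left_inj] using h2)]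
      · have hz : coeff (a :: u)
            (ringComm (FreeAlgebra.ι R a) (l'.map (FreeAlgebra.ι R)) * FreeAlgebra.ι R b)
            = 0 := by
          apply coeff_mul_ι_zero
          rintro ⟨u₀, hu₀⟩
          rcases u₀ with _ | ⟨c, u₁⟩
          · simp at hu₀; exact hab hu₀.1
          · simp at hu₀; exact h ⟨u₁, hu₀.2⟩
        rw [hz]
        rw [if_neg (fun hu => h ⟨l', hu⟩)]

lemma gamma_repr {x : FreeAlgebra R (Fin n)} (hx : x ∈ gammaSub R n) :
    x = ∑ σ : Equiv.Perm (Fin n), coeff (List.ofFn σ) x • M R (List.ofFn σ) := by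
  set T : FreeAlgebra R (Fin n) →ₗ[R] FreeAlgebra R (Fin n) :=
    ∑ σ : Equiv.Perm (Fin n), (coeff (List.ofFn σ)).smulRight (M R (List.ofFn σ)) with hT
  have hTx : ∀ y ∈ gammaSub R n, T y = y := by
    intro y hy
    induction hy using Submodule.span_induction with
    | mem z hz =>
        obtain ⟨τ, rfl⟩ := hz
        rw [hT, LinearMap.sum_apply]
        rw [Finset.sum_eq_single τ]
        · simp [coeff_M]
        · intro σ _ hστ
          simp only [LinearMap.smulRight_apply, coeff_M]
          rw [if_neg, zero_smul]
          intro hEq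
          exact hστ (Equiv.coe_fn_injective (List.ofFn_injective hEq)).symm
        · intro h; exact absurd (Finset.mem_univ τ) h
    | zero => simp
    | add y z _ _ hy hz => rw [map_add, hy, hz]
    | smul r y _ hy => rw [map_smul, hy]
  calc x = T x := (hTx x hx).symm
    _ = _ := by
        rw [hT, LinearMap.sum_apply]
        exact Finset.sum_congr rfl (fun σ _ => rfl)

end Stmt4

namespace Stmt4

variable {R : Type u} [CommRing R] {n : ℕ}

noncomputable def Fu (u : List (Fin n)) :
    (FreeAlgebra R (Fin n)) ⊗[R] (FreeAlgebra R (Fin n)) →ₗ[R] FreeAlgebra R (Fin n) :=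
  (TensorProduct.lid R _).toLinearMap ∘ₗ LinearMap.rTensor _ (coeff u)

@[simp] lemma Fu_tmul (u : List (Fin n)) (p q : FreeAlgebra R (Fin n)) :
    Fu u (p ⊗ₜ[R] q) = coeff u p • q := by
  simp [Fu]

lemma Fu_one_mul (u : List (Fin n)) (a : Fin n)
    (t : (FreeAlgebra R (Fin n)) ⊗[R] (FreeAlgebra R (Fin n))) :
    Fu u ((1 ⊗ₜ[R] FreeAlgebra.ι R a) * t) = FreeAlgebra.ι R a * Fu u t := by
  induction t with
  | zero => simp
  | tmul p q => simp [Algebra.TensorProduct.tmul_mul_tmul, mul_smul_comm]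
  | add s t hs ht => rw [mul_add, map_add, hs, ht, map_add, mul_add]

lemma Fu_mul_one (u : List (Fin n)) (a : Fin n)
    (t : (FreeAlgebra R (Fin n)) ⊗[R] (FreeAlgebra R (Fin n))) :
    Fu u ((FreeAlgebra.ι R a ⊗ₜ[R] 1) * t)
      = if u.head? = some a then Fu u.tail t else 0 := by
  induction t with
  | zero => simp
  | tmul p q =>
      rw [Algebra.TensorProduct.tmul_mul_tmul, one_mul, Fu_tmul, coeff_ι_mul]
      split_ifs <;> simp
  | add s t hs ht =>
      rw [mul_add, map_add, hs, ht]
      split_ifs <;> simp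

def spl {α : Type*} [DecidableEq α] : List α → List α → Multiset (List α)
  | u, [] => if u = [] then {[]} else 0
  | u, a :: w => (if u.head? = some a then spl u.tail w else 0) + (spl u w).map (a :: ·)

lemma Fu_psi_M (w : List (Fin n)) : ∀ u : List (Fin n),
    Fu u (psiFree R n (M R w)) = ((spl u w).map (M R)).sum := by
  induction w with
  | nil =>
      intro u
      have h1 : psiFree R n (M R ([] : List (Fin n))) = 1 ⊗ₜ[R] 1 := by
        simp [Algebra.TensorProduct.one_def]
      rw [h1, Fu_tmul]
      have : coeff u (1 : FreeAlgebra R (Fin n)) = if u = [] then 1 else 0 := by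
        have := coeff_M (R := R) u []
        simpa [eq_comm] using this
      rw [this, spl]
      split_ifs <;> simp
  | cons a w ih =>
      intro u
      have h1 : psiFree R n (M R (a :: w))
          = (FreeAlgebra.ι R a ⊗ₜ[R] 1) * psiFree R n (M R w)
            + (1 ⊗ₜ[R] FreeAlgebra.ι R a) * psiFree R n (M R w) := by
        rw [M_cons, map_mul, psiFree_ι, add_mul]
      rw [h1, map_add, Fu_one_mul, Fu_mul_one, ih u]
      have h2 : FreeAlgebra.ι R a * ((spl u w).map (M R)).sum
          = (((spl u w).map (a :: ·)).map (M R)).sum := by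
        rw [Multiset.map_map]
        have := map_multiset_sum ((LinearMap.mulLeft R (FreeAlgebra.ι R a)).toAddMonoidHom)
          ((spl u w).map (M R))
        simp only [LinearMap.toAddMonoidHom_coe, LinearMap.mulLeft_apply] at this
        rw [this, Multiset.map_map]
        rfl
      rw [h2]
      show _ = ((spl u (a :: w)).map (M R)).sum
      rw [spl]
      rw [Multiset.map_add, Multiset.sum_add]
      congr 1
      split_ifs with h
      · rw [ih u.tail]
      · simp

end Stmt4

namespace Stmt4

section SplCombinatorics

variable {α : Type*} [DecidableEq α]

lemma spl_nil_left : ∀ w : List α, spl [] w = {w}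
  | [] => by rw [spl]; simp
  | a :: w => by
      rw [spl]
      simp [spl_nil_left w]

lemma count_of_mem_spl : ∀ (w u v : List α), v ∈ spl u w →
    ∀ x : α, w.count x = u.count x + v.count x
  | [], u, v, h, x => by
      rw [spl] at h
      split_ifs at h with hu
      · subst hu
        simp only [Multiset.mem_singleton] at h
        subst h; simp
      · simp at h
  | a :: w, u, v, h, x => by
      rw [spl, Multiset.mem_add] at h
      rcases h with h | h
      · split_ifs at h with hh
        · rcases u with _ | ⟨b, u'⟩
          · simp at hh
          · simp only [List.head?_cons, Option.some.injEq] at hh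
            subst hh
            have := count_of_mem_spl w u' v h x
            simp [List.count_cons, this]
            ring
        · simp at h
      · rw [Multiset.mem_map] at h
        obtain ⟨v', hv', rfl⟩ := h
        have := count_of_mem_spl w u v' hv' x
        simp [List.count_cons, this]
        ring

lemma mem_spl_not_head {a : α} {w u v : List α} (haw : a ∉ w)
    (h : v ∈ (if u.head? = some a then spl u.tail w else 0)) : a ∉ v := by
  split_ifs at h with hh
  · intro hav
    have hc := count_of_mem_spl w u.tail v h a
    have h1 : w.count a = 0 := List.count_eq_zero_of_not_mem haw
    have h2 : 0 < v.count a := List.count_pos_iff.mpr hav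
    omega
  · simp at h

lemma count_spl_le_one : ∀ (w u v : List α), w.Nodup → (spl u w).count v ≤ 1
  | [], u, v, _ => by
      rw [spl]
      split_ifs
      · rw [Multiset.count_singleton]
        split_ifs <;> simp
      · simp
  | a :: w, u, v, hnd => by
      rw [spl, Multiset.count_add]
      have hndw : w.Nodup := (List.nodup_cons.mp hnd).2
      have hanw : a ∉ w := (List.nodup_cons.mp hnd).1
      have hA : Multiset.count v (if u.head? = some a then spl u.tail w else 0) ≤ 1 := by
        split_ifs
        · exact count_spl_le_one w u.tail v hndw
        · simp
      by_cases hv : ∃ v' : List α, v = a :: v'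
      · obtain ⟨v', rfl⟩ := hv
        have hA0 : Multiset.count (a :: v') (if u.head? = some a then spl u.tail w else 0)
            = 0 := by
          rw [Multiset.count_eq_zero]
          intro hmem
          exact mem_spl_not_head hanw hmem (by simp)
        rw [hA0, Multiset.count_map_eq_count' _ _ (fun x y hxy => by
          simpa using hxy)]
        · exact Nat.zero_add _ ▸ count_spl_le_one w u v' hndw
      · have hB0 : Multiset.count v ((spl u w).map (a :: ·)) = 0 := by
          rw [Multiset.count_eq_zero]
          intro hmem
          rw [Multiset.mem_map] at hmem
          obtain ⟨v', _, hv'⟩ := hmem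
          exact hv ⟨v', hv'.symm⟩
        rw [hB0]
        omega

lemma spl_self_mem : ∀ (u v : List α), v ∈ spl u (u ++ v)
  | [], v => by rw [List.nil_append, spl_nil_left]; simp
  | a :: u, v => by
      rw [List.cons_append, spl, Multiset.mem_add]
      left
      simp only [List.head?_cons, if_pos rfl]
      exact spl_self_mem u v

lemma spl_position {z : α} : ∀ (w u v : List α), w.Nodup → (z :: v) ∈ spl u w →
    w.idxOf z ≤ u.length ∧ (w.idxOf z = u.length → w = u ++ z :: v)
  | [], u, v, _, h => by
      rw [spl] at h
      split_ifs at h with hu <;> simp at h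
  | a :: w, u, v, hnd, h => by
      have hndw : w.Nodup := (List.nodup_cons.mp hnd).2
      have hanw : a ∉ w := (List.nodup_cons.mp hnd).1
      rw [spl, Multiset.mem_add] at h
      rcases h with h | h
      · have hcond : u.head? = some a := by
          by_contra hc
          rw [if_neg hc] at h
          simp at h
        rw [if_pos hcond] at h
        rcases u with _ | ⟨b, u'⟩
        · simp at hcond
        · simp only [List.head?_cons, Option.some.injEq] at hcond
          subst hcond
          have hzw : z ∈ w := by
            have hc := count_of_mem_spl w u' (z :: v) h z
            have h1 : 0 < (z :: v).count z := by simp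
            have : 0 < w.count z := by omega
            exact List.count_pos_iff.mp this
          have hza : z ≠ b := fun hza => hanw (hza ▸ hzw)
          obtain ⟨ih1, ih2⟩ := spl_position w u' v hndw h
          rw [List.idxOf_cons_ne _ (fun hc => hza hc.symm)]
          constructor
          · simpa [List.length_cons] using Nat.succ_le_succ ih1
          · intro hEq
            have : w.idxOf z = u'.length := by
              simpa [List.length_cons] using hEq
            rw [List.cons_append, ih2 this]
      · rw [Multiset.mem_map] at h
        obtain ⟨y, hy, hzy⟩ := h
        obtain ⟨rfl, rfl⟩ : a = z ∧ y = v := by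
          simpa using hzy
        rw [List.idxOf_cons_self]
        refine ⟨Nat.zero_le _, fun hEq => ?_⟩
        obtain rfl : u = [] := List.length_eq_zero_iff.mp hEq.symm
        rw [spl_nil_left] at hy
        obtain rfl : y = w := by simpa using hy
        rfl

end SplCombinatorics

end Stmt4

namespace Stmt4

variable {R : Type u} [CommRing R] {n : ℕ}

lemma coeff_one (u : List (Fin n)) :
    coeff u (1 : FreeAlgebra R (Fin n)) = if u = [] then 1 else 0 := by
  have := coeff_M (R := R) u []
  simpa [eq_comm] using this

lemma coeff_multiset_sum (v : List (Fin n)) (s : Multiset (List (Fin n))) :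
    coeff v ((s.map (M R)).sum) = (s.count v : R) := by
  induction s using Multiset.induction_on with
  | empty => simp
  | cons m s ih =>
      rw [Multiset.map_cons, Multiset.sum_cons, map_add, ih, coeff_M,
        Multiset.count_cons]
      rcases eq_or_ne m v with rfl | h
      · rw [if_pos rfl, if_pos rfl]
        push_cast
        ring
      · rw [if_neg h, if_neg h.symm]
        push_cast
        ring

lemma coeff_zero_of_length {u : List (Fin n)} (hu : u.length ≠ n) :
    ∀ x ∈ gammaSub R n, coeff u x = 0 := by
  intro x hx
  have : gammaSub R n ≤ LinearMap.ker (coeff u) := by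
    rw [gammaSub, Submodule.span_le]
    rintro y ⟨σ, rfl⟩
    simp only [SetLike.mem_coe, LinearMap.mem_ker, coeff_M]
    rw [if_neg]
    intro h
    apply hu
    rw [← h]
    simp
  exact LinearMap.mem_ker.mp (this hx)

lemma indexOf_ofFn_symm (τ : Equiv.Perm (Fin n)) (z : Fin n) :
    (List.ofFn τ).idxOf z = (τ.symm z : ℕ) := by
  have hnd : (List.ofFn τ).Nodup := List.nodup_ofFn.mpr τ.injective
  have hlt : ((τ.symm z : ℕ)) < (List.ofFn τ).length := by simp
  have hget : (List.ofFn τ)[(τ.symm z : ℕ)]'hlt = z := by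
    rw [List.getElem_ofFn]
    have : (⟨(τ.symm z : ℕ), by simpa using hlt⟩ : Fin n) = τ.symm z := rfl
    rw [this, Equiv.apply_symm_apply]
  conv_lhs => rw [← hget]
  exact hnd.idxOf_getElem _ _

lemma shuffle_rel {x : FreeAlgebra R (Fin n)} (hx : x ∈ gammaSub R n) (hp : IsPrim x)
    (u : List (Fin n)) (hune : u ≠ []) (hulen : u.length < n) (v : List (Fin n)) :
    ∑ σ : Equiv.Perm (Fin n),
      coeff (List.ofFn σ) x * ((spl u (List.ofFn σ)).count v : R) = 0 := by
  have h0 : Fu u (psiFree R n x) = 0 := by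
    rw [hp, map_add, Fu_tmul, Fu_tmul, coeff_one, if_neg hune,
      coeff_zero_of_length (by omega) x hx]
    simp
  have hrepr := gamma_repr hx
  rw [hrepr] at h0
  rw [map_sum, map_sum] at h0
  simp only [map_smul, LinearMapClass.map_smul] at h0
  have h1 := congrArg (coeff v) h0
  rw [map_sum, map_zero] at h1
  calc ∑ σ : Equiv.Perm (Fin n),
        coeff (List.ofFn σ) x * ((spl u (List.ofFn σ)).count v : R)
      = ∑ σ : Equiv.Perm (Fin n),
        coeff v (coeff (List.ofFn σ) x • Fu u (psiFree R n (M R (List.ofFn σ)))) := by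
        refine Finset.sum_congr rfl (fun σ _ => ?_)
        rw [map_smul, Fu_psi_M, coeff_multiset_sum, smul_eq_mul]
    _ = 0 := h1

end Stmt4

namespace Stmt4

variable {R : Type u} [CommRing R] {n : ℕ}

lemma coeff_all_zero (hn : 1 ≤ n) {x : FreeAlgebra R (Fin n)} (hx : x ∈ gammaSub R n)
    (hp : IsPrim x)
    (h0 : ∀ σ : Equiv.Perm (Fin n), σ ⟨0, hn⟩ = ⟨0, hn⟩ → coeff (List.ofFn σ) x = 0) :
    ∀ σ : Equiv.Perm (Fin n), coeff (List.ofFn σ) x = 0 := by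
  set z₀ : Fin n := ⟨0, hn⟩ with hz₀
  suffices H : ∀ k : ℕ, ∀ σ : Equiv.Perm (Fin n), (σ.symm z₀ : ℕ) = k →
      coeff (List.ofFn σ) x = 0 by
    intro σ; exact H _ σ rfl
  intro k
  induction k using Nat.strong_induction_on with
  | _ k ih =>
    intro σ hk
    by_cases hk0 : k = 0
    · apply h0
      have h1 : σ.symm z₀ = z₀ := Fin.ext (by rw [hk, hk0])
      have := congrArg σ h1
      rw [Equiv.apply_symm_apply] at this
      exact this.symm
    · have hw₀nd : (List.ofFn σ).Nodup := List.nodup_ofFn.mpr σ.injective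
      have hlen : (List.ofFn σ).length = n := by simp
      have hpn : k < n := by rw [← hk]; exact (σ.symm z₀).isLt
      set u := (List.ofFn σ).take k with hu
      set v := (List.ofFn σ).drop (k+1) with hv
      have hw0 : List.ofFn σ = u ++ z₀ :: v := by
        have hget : (List.ofFn σ)[k]'(by omega) = z₀ := by
          rw [List.getElem_ofFn]
          have : (⟨k, hpn⟩ : Fin n) = σ.symm z₀ := Fin.ext (by simp [hk])
          rw [this, Equiv.apply_symm_apply]
        have h2 : (List.ofFn σ).drop k = z₀ :: v := by
          rw [List.drop_eq_getElem_cons (by omega), hget]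
        conv_lhs => rw [← List.take_append_drop k (List.ofFn σ)]
        rw [h2]
      have hulen : u.length = k := by
        rw [hu, List.length_take]
        omega
      have hune : u ≠ [] := by
        intro h
        rw [h] at hulen
        simp at hulen
        omega
      have hrel := shuffle_rel hx hp u hune (by omega) (z₀ :: v)
      rw [Finset.sum_eq_single σ] at hrel
      · have hcount : (spl u (List.ofFn σ)).count (z₀ :: v) = 1 := by
          refine le_antisymm (count_spl_le_one _ _ _ hw₀nd) ?_
          rw [Nat.one_le_iff_ne_zero]
          intro hzero
          rw [Multiset.count_eq_zero] at hzero
          exact hzero (hw0 ▸ spl_self_mem u (z₀ :: v))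
        rw [hcount] at hrel
        simpa using hrel
      · intro τ _ hτσ
        by_cases hc : (z₀ :: v) ∈ spl u (List.ofFn τ)
        · have hτnd : (List.ofFn τ).Nodup := List.nodup_ofFn.mpr τ.injective
          obtain ⟨hle, heq⟩ := spl_position _ _ _ hτnd hc
          rw [indexOf_ofFn_symm] at hle heq
          rcases lt_or_eq_of_le hle with hlt | heqq
          · rw [ih ((τ.symm z₀ : ℕ)) (by omega) τ rfl, zero_mul]
          · exfalso
            apply hτσ
            have := heq (by omega)
            rw [← hw0] at this
            exact Equiv.coe_fn_injective (List.ofFn_injective this)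
        · rw [Multiset.count_eq_zero.mpr hc]
          simp
      · intro h; exact absurd (Finset.mem_univ σ) h

end Stmt4

namespace Stmt4

variable {R : Type u} [CommRing R] {n : ℕ}

noncomputable def lieGen (R : Type u) [CommRing R] {n : ℕ} (hn : 1 ≤ n)
    (σ : Equiv.Perm (Fin n)) : FreeAlgebra R (Fin n) :=
  ringComm (FreeAlgebra.ι R (σ ⟨0, hn⟩))
    (List.ofFn fun s : Fin (n-1) =>
      FreeAlgebra.ι R (σ ⟨(s : ℕ) + 1, by omega⟩))

lemma lieGen_mem_SP' (hn : 1 ≤ n) (σ : Equiv.Perm (Fin n)) :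
    lieGen R hn σ ∈ SP R (List.ofFn σ) := lieGen_mem_SP hn σ

lemma isPrim_lieGen (hn : 1 ≤ n) (σ : Equiv.Perm (Fin n)) : IsPrim (lieGen R hn σ) := by
  refine IsPrim.ringComm (isPrim_ι _) _ (fun y hy => ?_)
  rw [List.mem_ofFn] at hy
  obtain ⟨s, rfl⟩ := hy
  exact isPrim_ι _

lemma coeff_lieGen (hn : 1 ≤ n) (σ τ : Equiv.Perm (Fin n))
    (hσ : σ ⟨0, hn⟩ = ⟨0, hn⟩) (hτ : τ ⟨0, hn⟩ = ⟨0, hn⟩) :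
    coeff (List.ofFn σ) (lieGen R hn τ) = if τ = σ then 1 else 0 := by
  obtain ⟨m, rfl⟩ : ∃ m : ℕ, n = m + 1 := ⟨n - 1, by omega⟩
  have hl : (List.ofFn fun s : Fin (m+1-1) =>
      FreeAlgebra.ι R (τ ⟨(s : ℕ) + 1, by omega⟩))
      = (List.ofFn fun s : Fin m => τ s.succ).map (FreeAlgebra.ι R) := by
    rw [List.map_ofFn]; rfl
  have hgen : lieGen R hn τ
      = ringComm (FreeAlgebra.ι R (τ ⟨0, hn⟩))
          ((List.ofFn fun s : Fin m => τ s.succ).map (FreeAlgebra.ι R)) := by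
    rw [lieGen, hl]
  have h0 : (⟨0, hn⟩ : Fin (m+1)) = 0 := rfl
  have hofn : List.ofFn σ = σ ⟨0, hn⟩ :: List.ofFn (fun s : Fin m => σ s.succ) := by
    rw [List.ofFn_succ]
    simp [h0]
  have hz : τ ⟨0, hn⟩ = σ ⟨0, hn⟩ := by rw [hσ, hτ]
  have hnotmem : σ ⟨0, hn⟩ ∉ List.ofFn (fun s : Fin m => τ s.succ) := by
    rw [List.mem_ofFn]
    rintro ⟨s, hs⟩
    have := τ.injective (hs.trans hz.symm)
    exact (Fin.succ_ne_zero s) (by rw [h0] at this; exact this)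
  rw [hgen, hz, hofn, coeff_ringComm _ _ hnotmem]
  have hiff : (List.ofFn (fun s : Fin m => σ s.succ) = List.ofFn (fun s : Fin m => τ s.succ))
      ↔ τ = σ := by
    rw [List.ofFn_inj]
    constructor
    · intro hfe
      apply Equiv.ext
      intro i
      refine Fin.cases ?_ ?_ i
      · rw [← h0, hσ, hτ]
      · intro s
        exact (congrFun hfe s).symm
    · intro hst
      subst hst
      rfl
  split_ifs with h1 h2 h2
  · rfl
  · exact absurd (hiff.mp h1) h2
  · exact absurd (hiff.mpr h2) h1
  · rfl

lemma forward (hn : 1 ≤ n) {x : FreeAlgebra R (Fin n)} (hx : x ∈ gammaSub R n)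
    (hp : IsPrim x) :
    x ∈ Submodule.span R (Set.range (lieGen R hn (n := n))) := by
  classical
  set z₀ : Fin n := ⟨0, hn⟩ with hz₀
  set S : Finset (Equiv.Perm (Fin n)) := Finset.univ.filter (fun σ => σ z₀ = z₀) with hS
  set y : FreeAlgebra R (Fin n) :=
    ∑ σ ∈ S, coeff (List.ofFn σ) x • lieGen R hn σ with hy
  have hy_lie : y ∈ Submodule.span R (Set.range (lieGen R hn (n := n))) :=
    Submodule.sum_mem _ (fun σ _ =>
      Submodule.smul_mem _ _ (Submodule.subset_span ⟨σ, rfl⟩))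
  have hy_gamma : y ∈ gammaSub R n :=
    Submodule.sum_mem _ (fun σ _ =>
      Submodule.smul_mem _ _ (SP_ofFn_le_gamma σ (lieGen_mem_SP' hn σ)))
  have hy_prim : y ∈ primSub R n :=
    Submodule.sum_mem _ (fun σ _ =>
      Submodule.smul_mem _ _ (isPrim_lieGen hn σ))
  have hz_gamma : x - y ∈ gammaSub R n := sub_mem hx hy_gamma
  have hz_prim : IsPrim (x - y) := hp.sub hy_prim
  have hcoeffy : ∀ σ : Equiv.Perm (Fin n), σ z₀ = z₀ →
      coeff (List.ofFn σ) y = coeff (List.ofFn σ) x := by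
    intro σ hσ
    rw [hy, map_sum]
    rw [Finset.sum_eq_single σ]
    · rw [map_smul, coeff_lieGen hn σ σ hσ hσ, if_pos rfl, smul_eq_mul, mul_one]
    · intro τ hτS hτσ
      rw [hS, Finset.mem_filter] at hτS
      rw [map_smul, coeff_lieGen hn σ τ hσ hτS.2, if_neg hτσ, smul_eq_mul, mul_zero]
    · intro hσS
      exact absurd (by rw [hS]; exact Finset.mem_filter.mpr ⟨Finset.mem_univ _, hσ⟩) hσS
  have hzero : ∀ σ : Equiv.Perm (Fin n), coeff (List.ofFn σ) (x - y) = 0 := by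
    apply coeff_all_zero hn hz_gamma hz_prim
    intro σ hσ
    rw [map_sub, hcoeffy σ hσ, sub_self]
  have hxy : x - y = 0 := by
    have := gamma_repr hz_gamma
    rw [this]
    refine Finset.sum_eq_zero (fun σ _ => ?_)
    rw [hzero σ, zero_smul]
  rw [sub_eq_zero] at hxy
  rw [hxy]
  exact hy_lie

end Stmt4

theorem gamma_inter_primitives_eq_lie (R : Type u) [CommRing R] (n : ℕ) (hn : 1 ≤ n) :
    ((Submodule.span R (Set.range fun σ : Equiv.Perm (Fin n) =>
        ((List.ofFn fun s => FreeAlgebra.ι R (σ s)).prod : FreeAlgebra R (Fin n))) :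
      Submodule R (FreeAlgebra R (Fin n))) : Set (FreeAlgebra R (Fin n)))
      ∩ {x : FreeAlgebra R (Fin n) | psiFree R n x = x ⊗ₜ[R] 1 + 1 ⊗ₜ[R] x}
    = ((Submodule.span R (Set.range fun σ : Equiv.Perm (Fin n) =>
        ringComm (FreeAlgebra.ι R (σ ⟨0, hn⟩))
          (List.ofFn fun s : Fin (n-1) =>
            FreeAlgebra.ι R (σ ⟨(s : ℕ) + 1, by have := s.is_lt; omega⟩))) :
      Submodule R (FreeAlgebra R (Fin n))) : Set (FreeAlgebra R (Fin n))) := by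
  have hfun : (fun σ : Equiv.Perm (Fin n) =>
      ((List.ofFn fun s => FreeAlgebra.ι R (σ s)).prod : FreeAlgebra R (Fin n)))
      = fun σ : Equiv.Perm (Fin n) => Stmt4.M R (List.ofFn σ) :=
    funext fun σ => by rw [Stmt4.M, List.map_ofFn]; rfl
  have hgamma : Submodule.span R (Set.range fun σ : Equiv.Perm (Fin n) =>
      ((List.ofFn fun s => FreeAlgebra.ι R (σ s)).prod : FreeAlgebra R (Fin n)))
      = Stmt4.gammaSub R n := by
    rw [Stmt4.gammaSub, hfun]
  have hlie : (Set.range fun σ : Equiv.Perm (Fin n) =>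
        ringComm (FreeAlgebra.ι R (σ ⟨0, hn⟩))
          (List.ofFn fun s : Fin (n-1) =>
            FreeAlgebra.ι R (σ ⟨(s : ℕ) + 1, by have := s.is_lt; omega⟩)))
      = Set.range (Stmt4.lieGen R hn (n := n)) := rfl
  rw [hgamma, hlie]
  ext x
  simp only [Set.mem_inter_iff, SetLike.mem_coe, Set.mem_setOf_eq]
  constructor
  · rintro ⟨hxg, hxp⟩
    exact Stmt4.forward hn hxg hxp
  · intro hx
    have h1 : Submodule.span R (Set.range (Stmt4.lieGen R hn (n := n)))
        ≤ Stmt4.gammaSub R n ⊓ Stmt4.primSub R n := by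
      rw [Submodule.span_le]
      rintro y ⟨σ, rfl⟩
      exact ⟨Stmt4.SP_ofFn_le_gamma σ (Stmt4.lieGen_mem_SP' hn σ),
        Stmt4.isPrim_lieGen hn σ⟩
    obtain ⟨h2, h3⟩ := Submodule.mem_inf.mp (h1 hx)
    exact ⟨h2, h3⟩
end

section
/- Let R be a commutative ring and let φ = (φ_V) be a functorial R-linear map φ_V : V^{⊗n} → V^{⊗m}, i.e. an R-linear map defined for every free R-module V, natural with respect to all R-linear maps between free R-modules. Then: (1) if m = n and V is a free R-module of rank n, then for all elements x_1,…,x_n ∈ V the element φ_V(x_1⊗⋯⊗x_n) belongs to the R-submodule of V^{⊗n} spanned by the elements x_{σ(1)}⊗⋯⊗x_{σ(n)} as σ runs through the symmetric group Σ_n; (2) if n ≠ m, then φ_V is the zero map for every free R-module V. -/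
/-!
STATEMENT 5: Let `φ` be a functorial `R`-linear map `φ_V : V^{⊗n} → V^{⊗m}`, defined for every
free `R`-module `V` and natural with respect to all `R`-linear maps between free `R`-modules.
Then (1) if `m = n` and `V` is free of rank `n` then, for all `x_1,…,x_n ∈ V`,
`φ_V(x_1 ⊗ ⋯ ⊗ x_n)` lies in the span of the `x_{σ(1)} ⊗ ⋯ ⊗ x_{σ(n)}` for `σ ∈ Σ_n`;
(2) if `n ≠ m` then `φ_V = 0` for every free `V`.
-/

universe u

open TensorProduct PiTensorProduct

section Helpers

variable (R : Type u) [CommRing R] (κ : Type*) [Fintype κ] [DecidableEq κ]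

/-- Basis-vector pure tensors in `⨂[R] (_ : Fin p), (κ → R)`. -/
noncomputable def bt (p : ℕ) (j : Fin p → κ) : ⨂[R] (_ : Fin p), (κ → R) :=
  tprod R fun k => Pi.single (j k) (1 : R)

noncomputable def toCoeffs (p : ℕ) :
    (⨂[R] (_ : Fin p), (κ → R)) →ₗ[R] ((Fin p → κ) →₀ R) :=
  PiTensorProduct.lift (∑ j : Fin p → κ,
    (Finsupp.lsingle j).compMultilinearMap
      ((MultilinearMap.mkPiAlgebra R (Fin p) R).compLinearMap fun k => LinearMap.proj (j k)))

lemma toCoeffs_tprod (p : ℕ) (v : Fin p → (κ → R)) :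
    toCoeffs R κ p (tprod R v) = ∑ j : Fin p → κ, Finsupp.single j (∏ k, v k (j k)) := by
  simp [toCoeffs, MultilinearMap.sum_apply]

lemma toCoeffs_bt (p : ℕ) (j' : Fin p → κ) :
    toCoeffs R κ p (bt R κ p j') = Finsupp.single j' 1 := by
  rw [bt, toCoeffs_tprod]
  have h1 : ∀ j : Fin p → κ, (∏ k, (Pi.single (j' k) (1:R) : κ → R) (j k)) = if j = j' then (1:R) else 0 := by
    intro j
    have : ∀ k, (Pi.single (j' k) (1:R) : κ → R) (j k) = if j k = j' k then (1:R) else 0 := by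
      intro k; rw [Pi.single_apply]
    rw [Finset.prod_congr rfl fun k _ => this k, Fintype.prod_boole]
    simp [funext_iff]
  rw [Finset.sum_congr rfl fun j _ => by rw [h1 j]]
  rw [Finset.sum_congr rfl fun j _ => (apply_ite (Finsupp.single j) _ _ _)]
  simp

lemma tprod_eq_sum (p : ℕ) (v : Fin p → (κ → R)) :
    (tprod R v : ⨂[R] (_ : Fin p), (κ → R))
      = ∑ j : Fin p → κ, (∏ k, v k (j k)) • bt R κ p j := by
  have hv : ∀ k, v k = ∑ a : κ, v k a • (Pi.single a (1:R) : κ → R) := by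
    intro k; funext b
    simp [Pi.single_apply, Finset.sum_apply, mul_ite]
  calc (PiTensorProduct.tprod R v : ⨂[R] (_ : Fin p), (κ → R))
      = PiTensorProduct.tprod R (fun k => ∑ a : κ, v k a • (Pi.single a (1:R) : κ → R)) := by
        exact congrArg (PiTensorProduct.tprod R) (funext hv)
    _ = ∑ j : Fin p → κ, PiTensorProduct.tprod R (fun k => v k (j k) • (Pi.single (j k) (1:R) : κ → R)) :=
        MultilinearMap.map_sum (PiTensorProduct.tprod R) fun k a => v k a • (Pi.single a (1:R) : κ → R)
    _ = ∑ j : Fin p → κ, (∏ k, v k (j k)) • bt R κ p j := by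
        refine Finset.sum_congr rfl fun j _ => ?_
        exact MultilinearMap.map_smul_univ (PiTensorProduct.tprod R) _ _

noncomputable def ofCoeffs (p : ℕ) :
    ((Fin p → κ) →₀ R) →ₗ[R] (⨂[R] (_ : Fin p), (κ → R)) :=
  Finsupp.linearCombination R (bt R κ p)

noncomputable def btBasis (p : ℕ) : Module.Basis (Fin p → κ) R (⨂[R] (_ : Fin p), (κ → R)) :=
  Module.Basis.ofRepr <| LinearEquiv.ofLinear (toCoeffs R κ p) (ofCoeffs R κ p)
    (by
      apply Finsupp.lhom_ext
      intro j r
      simp [ofCoeffs, Finsupp.linearCombination_single, toCoeffs_bt, Finsupp.smul_single])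
    (by
      apply PiTensorProduct.ext
      apply MultilinearMap.ext
      intro v
      simp only [LinearMap.compMultilinearMap_apply, LinearMap.comp_apply, LinearMap.id_apply]
      rw [toCoeffs_tprod, map_sum]
      simp only [ofCoeffs, Finsupp.linearCombination_single]
      exact (tprod_eq_sum R κ p v).symm)

lemma btBasis_apply (p : ℕ) (j : Fin p → κ) : btBasis R κ p j = bt R κ p j := by
  apply (btBasis R κ p).repr.injective
  rw [Module.Basis.repr_self]
  exact (toCoeffs_bt R κ p j).symm

lemma repr_bt (p : ℕ) (j : Fin p → κ) :
    (btBasis R κ p).repr (bt R κ p j) = Finsupp.single j 1 := by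
  rw [← btBasis_apply, Module.Basis.repr_self]

/-- The projection killing the basis vector `e i₀`. -/
noncomputable def killer (i₀ : κ) : (κ → R) →ₗ[R] (κ → R) :=
  (Pi.basisFun R κ).constr ℕ fun a => if a = i₀ then 0 else Pi.single a 1

lemma killer_single (i₀ a : κ) :
    killer R κ i₀ (Pi.single a 1) = if a = i₀ then 0 else (Pi.single a 1 : κ → R) := by
  have := Module.Basis.constr_basis (Pi.basisFun R κ) ℕ
    (fun a => if a = i₀ then 0 else (Pi.single a 1 : κ → R)) a
  rwa [Pi.basisFun_apply] at this

lemma map_killer_bt_mem (i₀ : κ) (p : ℕ) (j : Fin p → κ) (hr : i₀ ∈ Set.range j) :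
    PiTensorProduct.map (fun _ : Fin p => killer R κ i₀) (bt R κ p j) = 0 := by
  rw [bt, PiTensorProduct.map_tprod]
  obtain ⟨k, hk⟩ := hr
  exact MultilinearMap.map_coord_zero (PiTensorProduct.tprod R) k
    (by rw [killer_single, if_pos hk])

lemma map_killer_bt_not_mem (i₀ : κ) (p : ℕ) (j : Fin p → κ) (hr : i₀ ∉ Set.range j) :
    PiTensorProduct.map (fun _ : Fin p => killer R κ i₀) (bt R κ p j) = bt R κ p j := by
  rw [bt, PiTensorProduct.map_tprod]
  congr 1
  funext k
  rw [killer_single, if_neg fun h => hr ⟨k, h⟩]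

lemma repr_map_killer_mem (i₀ : κ) (p : ℕ) (j : Fin p → κ) (hij : i₀ ∈ Set.range j)
    (X : ⨂[R] (_ : Fin p), (κ → R)) :
    (btBasis R κ p).repr (PiTensorProduct.map (fun _ : Fin p => killer R κ i₀) X) j = 0 := by
  have key : (Finsupp.lapply j) ∘ₗ ((btBasis R κ p).repr.toLinearMap : (⨂[R] (_ : Fin p), (κ → R)) →ₗ[R] ((Fin p → κ) →₀ R))
      ∘ₗ (PiTensorProduct.map fun _ : Fin p => killer R κ i₀) = 0 := by
    apply Module.Basis.ext (btBasis R κ p)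
    intro j'
    rw [btBasis_apply]
    simp only [LinearMap.comp_apply, LinearMap.zero_apply, Finsupp.lapply_apply,
      LinearEquiv.coe_coe]
    by_cases h' : i₀ ∈ Set.range j'
    · rw [map_killer_bt_mem R κ i₀ p j' h']; simp
    · rw [map_killer_bt_not_mem R κ i₀ p j' h', repr_bt, Finsupp.single_apply,
        if_neg (by rintro rfl; exact h' hij)]
  exact LinearMap.congr_fun key X

lemma repr_map_killer_not_mem (i₀ : κ) (p : ℕ) (j : Fin p → κ) (hij : i₀ ∉ Set.range j)
    (X : ⨂[R] (_ : Fin p), (κ → R)) :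
    (btBasis R κ p).repr (PiTensorProduct.map (fun _ : Fin p => killer R κ i₀) X) j
      = (btBasis R κ p).repr X j := by
  have key : (Finsupp.lapply j) ∘ₗ ((btBasis R κ p).repr.toLinearMap : (⨂[R] (_ : Fin p), (κ → R)) →ₗ[R] ((Fin p → κ) →₀ R))
      ∘ₗ (PiTensorProduct.map fun _ : Fin p => killer R κ i₀)
      = (Finsupp.lapply j) ∘ₗ ((btBasis R κ p).repr.toLinearMap :
          (⨂[R] (_ : Fin p), (κ → R)) →ₗ[R] ((Fin p → κ) →₀ R)) := by
    apply Module.Basis.ext (btBasis R κ p)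
    intro j'
    rw [btBasis_apply]
    simp only [LinearMap.comp_apply, Finsupp.lapply_apply, LinearEquiv.coe_coe]
    by_cases h' : i₀ ∈ Set.range j'
    · rw [map_killer_bt_mem R κ i₀ p j' h', repr_bt, Finsupp.single_apply,
        if_neg (by rintro rfl; exact hij h'), map_zero]
      simp
    · rw [map_killer_bt_not_mem R κ i₀ p j' h']
  exact LinearMap.congr_fun key X

/-- The fundamental support lemma: any endo-natural linear map sends a basis pure tensor
with range `S` to a combination of basis pure tensors with range exactly `S`. -/
lemma supp_lemma {n m : ℕ}
    (ψ : (⨂[R] (_ : Fin n), (κ → R)) →ₗ[R] (⨂[R] (_ : Fin m), (κ → R)))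
    (hψ : ∀ q : (κ → R) →ₗ[R] (κ → R),
      (PiTensorProduct.map fun _ : Fin m => q) ∘ₗ ψ
        = ψ ∘ₗ (PiTensorProduct.map fun _ : Fin n => q))
    (h : Fin n → κ) (j : Fin m → κ) (hj : Set.range j ≠ Set.range h) :
    (btBasis R κ m).repr (ψ (bt R κ n h)) j = 0 := by
  have hcase : (∃ i₀, i₀ ∈ Set.range j ∧ i₀ ∉ Set.range h)
      ∨ (∃ i₀, i₀ ∈ Set.range h ∧ i₀ ∉ Set.range j) := by
    by_contra hc
    push_neg at hc
    exact hj (Set.Subset.antisymm hc.1 hc.2)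
  rcases hcase with ⟨i₀, hij, hih⟩ | ⟨i₀, hih, hij⟩
  · have h2 := LinearMap.congr_fun (hψ (killer R κ i₀)) (bt R κ n h)
    simp only [LinearMap.comp_apply] at h2
    rw [map_killer_bt_not_mem R κ i₀ n h hih] at h2
    rw [← h2]
    exact repr_map_killer_mem R κ i₀ m j hij _
  · rw [← repr_map_killer_not_mem R κ i₀ m j hij]
    have h2 := LinearMap.congr_fun (hψ (killer R κ i₀)) (bt R κ n h)
    simp only [LinearMap.comp_apply] at h2
    rw [h2, map_killer_bt_mem R κ i₀ n h hih, map_zero, map_zero]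
    simp

/-- Mapping a basis pure tensor by the map determined by `a ↦ x a`. -/
lemma map_constr_bt {V : Type u} [AddCommGroup V] [Module R V] (x : κ → V) (p : ℕ)
    (j : Fin p → κ) :
    PiTensorProduct.map (fun _ : Fin p => (Pi.basisFun R κ).constr ℕ x) (bt R κ p j)
      = PiTensorProduct.tprod R (x ∘ j) := by
  rw [bt, PiTensorProduct.map_tprod]
  congr 1
  funext k
  have := Module.Basis.constr_basis (Pi.basisFun R κ) ℕ x (j k)
  rwa [Pi.basisFun_apply] at this

/-- The doubling map `(κ → R) → (κ ⊕ κ → R)`. -/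
noncomputable def dbl : (κ → R) →ₗ[R] ((κ ⊕ κ) → R) :=
  (Pi.basisFun R κ).constr ℕ fun a => Pi.single (Sum.inl a) 1 + Pi.single (Sum.inr a) 1

lemma dbl_single (a : κ) :
    dbl R κ (Pi.single a 1)
      = (Pi.single (Sum.inl a) 1 : (κ ⊕ κ) → R) + Pi.single (Sum.inr a) 1 := by
  have := Module.Basis.constr_basis (Pi.basisFun R κ) ℕ
    (fun a => (Pi.single (Sum.inl a) 1 : (κ ⊕ κ) → R) + Pi.single (Sum.inr a) 1) a
  rwa [Pi.basisFun_apply] at this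

lemma map_dbl_bt (p : ℕ) (l : Fin p → κ) :
    PiTensorProduct.map (fun _ : Fin p => dbl R κ) (bt R κ p l)
      = ∑ t : Finset (Fin p),
          bt R (κ ⊕ κ) p (fun k => if k ∈ t then Sum.inl (l k) else Sum.inr (l k)) := by
  rw [bt, PiTensorProduct.map_tprod]
  have h1 : (fun k => dbl R κ (Pi.single (l k) 1))
      = (fun k => (Pi.single (Sum.inl (l k)) 1 : (κ ⊕ κ) → R))
        + (fun k => (Pi.single (Sum.inr (l k)) 1 : (κ ⊕ κ) → R)) := by
    funext k
    rw [dbl_single]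
    rfl
  rw [h1, MultilinearMap.map_add_univ]
  refine Finset.sum_congr rfl fun t _ => ?_
  rw [bt]
  congr 1
  funext k
  by_cases hk : k ∈ t <;> simp [Finset.piecewise, hk]

end Helpers

theorem functorial_tensor_power_maps (R : Type u) [CommRing R] (n m : ℕ)
    (φ : ∀ (V : Type u) [AddCommGroup V] [Module R V] [Module.Free R V],
      (⨂[R] (_ : Fin n), V) →ₗ[R] (⨂[R] (_ : Fin m), V))
    (hnat : ∀ (V : Type u) [AddCommGroup V] [Module R V] [Module.Free R V]
      (W : Type u) [AddCommGroup W] [Module R W] [Module.Free R W] (f : V →ₗ[R] W),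
      (PiTensorProduct.map fun _ : Fin m => f) ∘ₗ φ V
        = φ W ∘ₗ (PiTensorProduct.map fun _ : Fin n => f)) :
    -- (1) if `m = n` and `V` is a free module of rank `n`:
    (∀ h : m = n, ∀ (V : Type u) [AddCommGroup V] [Module R V] [Module.Free R V],
      (Module.Basis (Fin n) R V) → ∀ x : Fin n → V,
        (PiTensorProduct.reindex R (fun _ : Fin m => V) (finCongr h))
            (φ V (PiTensorProduct.tprod R x))
          ∈ Submodule.span R (Set.range fun σ : Equiv.Perm (Fin n) =>
              PiTensorProduct.tprod R (x ∘ σ))) ∧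
    -- (2) if `n ≠ m` then `φ` is the zero map:
    (n ≠ m → ∀ (V : Type u) [AddCommGroup V] [Module R V] [Module.Free R V], φ V = 0) := by
  classical
  set T : ⨂[R] (_ : Fin m), (Fin n → R) := φ (Fin n → R) (bt R (Fin n) n id) with hT
  have factA : ∀ j : Fin m → Fin n, ¬Function.Surjective j →
      (btBasis R (Fin n) m).repr T j = 0 := by
    intro j hj
    refine supp_lemma R (Fin n) (φ (Fin n → R)) (fun q => hnat _ _ q) id j fun heq => ?_
    rw [Set.range_id] at heq
    exact hj (Set.range_eq_univ.mp heq)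
  have transport : ∀ (V : Type u) [AddCommGroup V] [Module R V] [Module.Free R V],
      ∀ x : Fin n → V,
      φ V (PiTensorProduct.tprod R x)
        = PiTensorProduct.map (fun _ : Fin m => (Pi.basisFun R (Fin n)).constr ℕ x) T := by
    intro V _ _ _ x
    have h2 := LinearMap.congr_fun
      (hnat (Fin n → R) V ((Pi.basisFun R (Fin n)).constr ℕ x)) (bt R (Fin n) n id)
    simp only [LinearMap.comp_apply] at h2
    rw [map_constr_bt] at h2
    rw [← hT] at h2
    rw [show x ∘ id = x from rfl] at h2
    exact h2.symm
  have factB : ∀ j : Fin m → Fin n, ¬Function.Injective j →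
      (btBasis R (Fin n) m).repr T j = 0 := by
    intro j hinj
    obtain ⟨k₁, k₂, hjk, hne⟩ := Function.not_injective_iff.mp hinj
    set j'' : Fin m → (Fin n ⊕ Fin n) :=
      fun k => if k = k₁ then Sum.inl (j k) else Sum.inr (j k) with hj''
    have hG : ∀ X : ⨂[R] (_ : Fin m), (Fin n → R),
        (btBasis R (Fin n ⊕ Fin n) m).repr
            (PiTensorProduct.map (fun _ : Fin m => dbl R (Fin n)) X) j''
          = (btBasis R (Fin n) m).repr X j := by
      have key : (Finsupp.lapply j'') ∘ₗ ((btBasis R (Fin n ⊕ Fin n) m).repr.toLinearMap :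
            (⨂[R] (_ : Fin m), ((Fin n ⊕ Fin n) → R)) →ₗ[R] ((Fin m → Fin n ⊕ Fin n) →₀ R))
            ∘ₗ (PiTensorProduct.map fun _ : Fin m => dbl R (Fin n))
          = (Finsupp.lapply j) ∘ₗ ((btBasis R (Fin n) m).repr.toLinearMap :
            (⨂[R] (_ : Fin m), (Fin n → R)) →ₗ[R] ((Fin m → Fin n) →₀ R)) := by
        apply Module.Basis.ext (btBasis R (Fin n) m)
        intro l
        rw [btBasis_apply]
        simp only [LinearMap.comp_apply, Finsupp.lapply_apply, LinearEquiv.coe_coe,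
          LinearEquiv.coe_toLinearMap]
        rw [map_dbl_bt, map_sum, Finsupp.finset_sum_apply, repr_bt, Finsupp.single_apply,
          Finset.sum_congr rfl fun t _ => by rw [repr_bt, Finsupp.single_apply]]
        by_cases hl : l = j
        · rw [hl, if_pos rfl]
          have hiff : ∀ t : Finset (Fin m),
              (((fun k => if k ∈ t then Sum.inl (j k) else Sum.inr (j k)) :
                  Fin m → Fin n ⊕ Fin n) = j'') ↔ t = {k₁} := by
            intro t
            constructor
            · intro ht
              ext k
              have hk := congrFun ht k
              simp only [hj''] at hk
              simp only [Finset.mem_singleton]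
              constructor
              · intro hkt
                by_contra hkk
                rw [if_pos hkt, if_neg hkk] at hk
                exact Sum.inl_ne_inr hk
              · rintro rfl
                by_contra hkt
                rw [if_neg hkt, if_pos rfl] at hk
                exact Sum.inr_ne_inl hk
            · rintro rfl
              funext k
              simp only [hj'', Finset.mem_singleton]
          rw [Finset.sum_congr rfl fun t _ => if_congr (hiff t) rfl rfl]
          rw [Finset.sum_ite_eq' Finset.univ ({k₁} : Finset (Fin m)) fun _ => (1 : R)]
          simp
        · rw [if_neg hl]
          refine Finset.sum_eq_zero fun t _ => ?_
          rw [if_neg]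
          intro ht
          apply hl
          funext k
          have hk := congrArg (Sum.elim (id : Fin n → Fin n) id) (congrFun ht k)
          simpa [hj'', apply_ite (Sum.elim (id : Fin n → Fin n) id)] using hk
      intro X
      exact LinearMap.congr_fun key X
    have E := LinearMap.congr_fun
      (hnat (Fin n → R) ((Fin n ⊕ Fin n) → R) (dbl R (Fin n))) (bt R (Fin n) n id)
    simp only [LinearMap.comp_apply] at E
    have hrange : ∀ s : Finset (Fin n),
        Set.range j'' ≠ Set.range
          ((fun i => if i ∈ s then Sum.inl (id i) else Sum.inr (id i)) : Fin n → Fin n ⊕ Fin n) := by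
      intro s heq
      have h1 : Sum.inl (j k₁) ∈ Set.range j'' := ⟨k₁, by simp [hj'']⟩
      have h2 : Sum.inr (j k₁) ∈ Set.range j'' := ⟨k₂, by simp [hj'', hne.symm, ← hjk]⟩
      rw [heq] at h1 h2
      obtain ⟨i1, hi1⟩ := h1
      obtain ⟨i2, hi2⟩ := h2
      dsimp only [id_eq] at hi1 hi2
      by_cases hs1 : i1 ∈ s
      · rw [if_pos hs1] at hi1
        by_cases hs2 : i2 ∈ s
        · rw [if_pos hs2] at hi2
          exact Sum.inl_ne_inr hi2
        · rw [if_neg hs2] at hi2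
          obtain rfl : i1 = j k₁ := Sum.inl.inj hi1
          obtain rfl : i2 = j k₁ := Sum.inr.inj hi2
          exact hs2 hs1
      · rw [if_neg hs1] at hi1
        exact Sum.inr_ne_inl hi1
    rw [← hG T, hT, E, map_dbl_bt, map_sum, map_sum, Finsupp.finset_sum_apply]
    refine Finset.sum_eq_zero fun s _ => ?_
    exact supp_lemma R (Fin n ⊕ Fin n) (φ ((Fin n ⊕ Fin n) → R)) (fun q => hnat _ _ q)
      _ j'' (hrange s)
  constructor
  · intro h V _ _ _ b x
    subst h
    rw [transport V x]
    simp only [finCongr_refl, PiTensorProduct.reindex_refl, LinearEquiv.refl_apply]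
    rw [← Module.Basis.sum_repr (btBasis R (Fin m) m) T, map_sum]
    refine Submodule.sum_mem _ fun j _ => ?_
    rw [map_smul]
    by_cases hc : (btBasis R (Fin m) m).repr T j = 0
    · rw [hc, zero_smul]
      exact Submodule.zero_mem _
    · have hsurj : Function.Surjective j := by
        by_contra hns
        exact hc (factA j hns)
      refine Submodule.smul_mem _ _ (Submodule.subset_span ?_)
      refine ⟨Equiv.ofBijective j (Finite.surjective_iff_bijective.mp hsurj), ?_⟩
      rw [btBasis_apply, map_constr_bt]
      rfl
  · intro hnm V _ _ _
    have hz : ∀ j : Fin m → Fin n, (btBasis R (Fin n) m).repr T j = 0 := by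
      intro j
      by_cases hs : Function.Surjective j
      · refine factB j fun hinj => ?_
        exact hnm (by simpa using (Fintype.card_of_bijective ⟨hinj, hs⟩).symm)
      · exact factA j hs
    have hT0 : T = 0 := by
      apply (btBasis R (Fin n) m).repr.map_eq_zero_iff.mp
      ext j
      simp [hz j]
    apply PiTensorProduct.ext
    apply MultilinearMap.ext
    intro x
    simp only [LinearMap.compMultilinearMap_apply, LinearMap.zero_apply]
    rw [transport V x, hT0, map_zero]
end

section
/- Let n, k, t ≥ 1, let I_1,…,I_t be sequences of length k with entries in {1,…,n}, let n_1,…,n_t be integers, and work in A^ℤ(y_1,…,y_n). Each 1 + n_s y_{I_s} is a unit, and the left-normed iterated group commutator of units satisfies [[1 + n_1 y_{I_1}, 1 + n_2 y_{I_2}],…, 1 + n_t y_{I_t}] = 1 + n_1 n_2 ⋯ n_t [[y_{I_1}, y_{I_2}],…, y_{I_t}], where on the right the bracket is the left-normed iterated ring commutator with [a,b] = ab − ba. -/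
/-!
STATEMENT 14: In `A^ℤ(y_1,…,y_n)`, for sequences `I_1,…,I_t` of length `k` with entries in
`{1,…,n}` and integers `n_1,…,n_t`, each `1 + n_s y_{I_s}` is a unit and
`[[1 + n_1 y_{I_1}, 1 + n_2 y_{I_2}],…, 1 + n_t y_{I_t}]
  = 1 + n_1 ⋯ n_t [[y_{I_1}, y_{I_2}],…, y_{I_t}]`,
where on the left the bracket is the left-normed iterated group commutator of units and on
the right the left-normed iterated ring commutator.  (The index set `{1,…,t}` with `t ≥ 1`
is modelled by `Fin (t+1)` with `t : ℕ`.)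
-/

universe u

/-- The monomial `y_I = y_{i_1} ⋯ y_{i_k}` associated to a sequence `I`. -/
noncomputable def yI (R : Type u) [CommRing R] {n k : ℕ} (w : Fin k → Fin n) :
    CohenAlgebra R n :=
  (List.ofFn fun s => ya R (w s)).prod

/-! ### Auxiliary material -/

/-- word monomials indexed by lists -/
noncomputable def yaW {n : ℕ} (L : List (Fin n)) : CohenAlgebra ℤ n :=
  (L.map (ya ℤ)).prod

lemma yaW_append {n : ℕ} (L1 L2 : List (Fin n)) :
    yaW (L1 ++ L2) = yaW L1 * yaW L2 := by
  simp [yaW]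

lemma yaW_eq_zero {n : ℕ} {L : List (Fin n)} (h : ¬ L.Nodup) : yaW L = 0 := by
  have h1 : yaW L
      = RingQuot.mkAlgHom ℤ (cohenRel ℤ n) ((L.map (FreeAlgebra.ι ℤ)).prod) := by
    rw [yaW, map_list_prod, List.map_map]; rfl
  have hrel : cohenRel ℤ n ((L.map (FreeAlgebra.ι ℤ)).prod) 0 := by
    refine ⟨rfl, L.length, L.get, ?_, ?_⟩
    · rw [← List.nodup_iff_injective_get]; exact h
    · congr 1
      conv_lhs => rw [← List.ofFn_get L]
      rw [List.map_ofFn]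
      rfl
  rw [h1, RingQuot.mkAlgHom_rel ℤ hrel, map_zero]

lemma span_yaW (n : ℕ) :
    Submodule.span ℤ (Set.range (yaW (n := n))) = ⊤ := by
  set M := Submodule.span ℤ (Set.range (yaW (n := n))) with hM
  have hone : (1 : CohenAlgebra ℤ n) ∈ M :=
    Submodule.subset_span ⟨[], by simp [yaW]⟩
  have hmul : ∀ x ∈ M, ∀ y ∈ M, x * y ∈ M := by
    intro x hx y hy
    induction hx using Submodule.span_induction with
    | mem x hx =>
      obtain ⟨L1, rfl⟩ := hx
      induction hy using Submodule.span_induction with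
      | mem y hy =>
        obtain ⟨L2, rfl⟩ := hy
        exact Submodule.subset_span ⟨L1 ++ L2, yaW_append L1 L2⟩
      | zero => simp
      | add a b _ _ ha hb => rw [mul_add]; exact add_mem ha hb
      | smul c a _ ha => rw [mul_smul_comm]; exact Submodule.smul_mem _ _ ha
    | zero => simp
    | add a b _ _ ha hb => rw [add_mul]; exact add_mem ha hb
    | smul c a _ ha => rw [smul_mul_assoc]; exact Submodule.smul_mem _ _ ha
  let S : Subalgebra ℤ (CohenAlgebra ℤ n) := M.toSubalgebra hone (fun x y hx hy => hmul x hx y hy)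
  have htop : (⊤ : Subalgebra ℤ (CohenAlgebra ℤ n)) ≤ S := by
    have hadj : Algebra.adjoin ℤ (Set.range (ya ℤ (n := n))) = ⊤ := by
      have := FreeAlgebra.adjoin_range_ι ℤ (Fin n)
      have h2 : (Algebra.adjoin ℤ (Set.range (FreeAlgebra.ι ℤ (X := Fin n)))).map
          (RingQuot.mkAlgHom ℤ (cohenRel ℤ n))
          = Algebra.adjoin ℤ (Set.range (ya ℤ (n := n))) := by
        rw [AlgHom.map_adjoin, ← Set.range_comp]; rfl
      rw [this, Algebra.map_top] at h2
      rw [← h2]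
      exact (AlgHom.range_eq_top _).mpr (RingQuot.mkAlgHom_surjective ℤ _)
    rw [← hadj]
    apply Algebra.adjoin_le
    rintro _ ⟨j, rfl⟩
    exact Submodule.subset_span ⟨[j], by simp [yaW]⟩
  rw [eq_top_iff]
  intro x _
  exact htop (by trivial)

def NilP {A : Type*} [Ring A] (z : A) : Prop := ∀ x : A, z * x * z = 0

lemma yI_nilP {n k : ℕ} (hk : 1 ≤ k) (w : Fin k → Fin n) :
    NilP (yI ℤ w) := by
  have hyI : yI ℤ w = yaW (List.ofFn w) := by
    rw [yI, yaW, List.map_ofFn]; rfl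
  intro x
  have hx : x ∈ Submodule.span ℤ (Set.range (yaW (n := n))) := by
    rw [span_yaW]; trivial
  induction hx using Submodule.span_induction with
  | mem x hx =>
    obtain ⟨L, rfl⟩ := hx
    rw [hyI, ← yaW_append, ← yaW_append]
    apply yaW_eq_zero
    intro hnd
    rw [List.nodup_append] at hnd
    have hmem : w ⟨0, hk⟩ ∈ List.ofFn w := by
      rw [List.mem_ofFn]; exact ⟨⟨0, hk⟩, rfl⟩
    exact hnd.2.2 _ (List.mem_append.mpr (Or.inl hmem)) _ hmem rfl
  | zero => simp
  | add a b _ _ ha hb => rw [mul_add, add_mul, ha, hb, add_zero]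
  | smul c a _ ha => rw [mul_smul_comm, smul_mul_assoc, ha]; simp

lemma NilP.smul {A : Type*} [Ring A] {z : A} (h : NilP z) (c : ℤ) : NilP (c • z) := by
  intro x
  rw [smul_mul_assoc, smul_mul_assoc, mul_smul_comm, h x, smul_zero, smul_zero]

lemma NilP.sq {A : Type*} [Ring A] {z : A} (h : NilP z) : z * z = 0 := by
  simpa using h 1

lemma NilP.bracket {A : Type*} [Ring A] {z a : A} (hz : NilP z) (ha : NilP a) :
    NilP (z * a - a * z) := by
  intro x
  have key : (z*a - a*z) * x * (z*a - a*z)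
      = (z*(a*x)*z)*a - z*(a*x*a)*z - a*(z*x*z)*a + a*(z*(x*a)*z) := by
    noncomm_ring
  rw [key, hz (a*x), hz x, hz (x*a), ha x]
  simp

lemma comm_formula {A : Type*} [Ring A] {z a : A} (hz : NilP z) (ha : NilP a) :
    (1 - z) * (1 - a) * (1 + z) * (1 + a) = 1 + (z * a - a * z) := by
  have key : (1 - z) * (1 - a) * (1 + z) * (1 + a)
      = 1 + (z*a - a*z) - z*1*z - (z*1*z)*a - a*1*a - a*z*a + z*a*z + z*(a*1*a) + (z*a*z)*a := by
    noncomm_ring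
  rw [key, hz 1, hz a, ha 1, ha z]
  simp

noncomputable def unitOf {A : Type*} [Ring A] (z : A) (h : z * z = 0) : Aˣ where
  val := 1 + z
  inv := 1 - z
  val_inv := by have : (1 + z) * (1 - z) = 1 - z * z := by noncomm_ring
                rw [this, h, sub_zero]
  inv_val := by have : (1 - z) * (1 + z) = 1 - z * z := by noncomm_ring
                rw [this, h, sub_zero]

lemma grp_ring_comm {A : Type*} [Ring A] :
    ∀ (l : List A), (∀ a ∈ l, NilP a) → ∀ (z : A), NilP z →
    ∀ (u : Aˣ), ((u : Aˣ) : A) = 1 + z → ∀ (U : List Aˣ),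
    List.Forall₂ (fun (v : Aˣ) a => ((v : Aˣ) : A) = 1 + a) U l →
    ((grpComm u U : Aˣ) : A) = 1 + ringComm z l := by
  intro l
  induction l with
  | nil =>
    intro _ z _ u hu U hU
    cases hU
    simpa [grpComm, ringComm] using hu
  | cons a l ih =>
    intro hl z hz u hu U hU
    cases hU with
    | cons hv hU' =>
      rename_i v U'
      have ha : NilP a := hl a List.mem_cons_self
      have hz' : NilP (z * a - a * z) := hz.bracket ha
      have huinv : ((u⁻¹ : Aˣ) : A) = 1 - z := by
        apply Units.inv_eq_of_mul_eq_one_left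
        rw [hu]
        have : (1 - z) * (1 + z) = 1 - z * z := by noncomm_ring
        rw [this, hz.sq, sub_zero]
      have hvinv : ((v⁻¹ : Aˣ) : A) = 1 - a := by
        apply Units.inv_eq_of_mul_eq_one_left
        rw [hv]
        have : (1 - a) * (1 + a) = 1 - a * a := by noncomm_ring
        rw [this, ha.sq, sub_zero]
      have hcomm : ((u⁻¹ * v⁻¹ * u * v : Aˣ) : A) = 1 + (z * a - a * z) := by
        rw [Units.val_mul, Units.val_mul, Units.val_mul, huinv, hvinv, hu, hv]
        exact comm_formula hz ha
      have := ih (fun b hb => hl b (List.mem_cons_of_mem _ hb)) (z * a - a * z) hz'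
        (u⁻¹ * v⁻¹ * u * v) hcomm U' hU'
      simpa [grpComm, ringComm] using this

lemma ringComm_smul {A : Type*} [Ring A] :
    ∀ (l : List (ℤ × A)) (c : ℤ) (x : A),
    ringComm (c • x) (l.map fun p => p.1 • p.2)
      = (c * (l.map Prod.fst).prod) • ringComm x (l.map Prod.snd) := by
  intro l
  induction l with
  | nil => intro c x; simp [ringComm]
  | cons p l ih =>
    intro c x
    have hstep : (c • x) * (p.1 • p.2) - (p.1 • p.2) * (c • x)
        = (c * p.1) • (x * p.2 - p.2 * x) := by
      rw [smul_mul_smul_comm, smul_mul_smul_comm, smul_sub, mul_comm p.1 c]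
    simp only [List.map_cons, ringComm, List.foldl_cons, List.prod_cons]
    rw [hstep]
    have := ih (c * p.1) (x * p.2 - p.2 * x)
    simp only [ringComm] at this
    rw [this, mul_assoc]

theorem word_unit_commutators (n k t : ℕ) (hn : 1 ≤ n) (hk : 1 ≤ k)
    (I : Fin (t+1) → (Fin k → Fin n)) (m : Fin (t+1) → ℤ) :
    -- each `1 + n_s ⬝ y_{I_s}` is a unit `u s`:
    ∃ u : Fin (t+1) → (CohenAlgebra ℤ n)ˣ,
      (∀ s, ((u s : (CohenAlgebra ℤ n)ˣ) : CohenAlgebra ℤ n) = 1 + m s • yI ℤ (I s)) ∧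
      -- and the iterated group commutator identity holds:
      ((grpComm (u 0) (List.ofFn fun s : Fin t => u s.succ) : (CohenAlgebra ℤ n)ˣ) :
          CohenAlgebra ℤ n)
        = 1 + (∏ s, m s) •
            ringComm (yI ℤ (I 0)) (List.ofFn fun s : Fin t => yI ℤ (I s.succ)) := by
  have hnil : ∀ s, NilP (m s • yI ℤ (I s)) := fun s => (yI_nilP hk (I s)).smul (m s)
  refine ⟨fun s => unitOf (m s • yI ℤ (I s)) (hnil s).sq, fun s => rfl, ?_⟩
  have hU : List.Forall₂ (fun (v : (CohenAlgebra ℤ n)ˣ) a => ((v : (CohenAlgebra ℤ n)ˣ) :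
        CohenAlgebra ℤ n) = 1 + a)
      (List.ofFn fun s : Fin t => unitOf (m s.succ • yI ℤ (I s.succ)) (hnil s.succ).sq)
      (List.ofFn fun s : Fin t => m s.succ • yI ℤ (I s.succ)) := by
    rw [List.forall₂_iff_get]
    refine ⟨by simp, ?_⟩
    intro i h1 h2
    simp only [List.get_ofFn]
    rfl
  have hmain := grp_ring_comm (List.ofFn fun s : Fin t => m s.succ • yI ℤ (I s.succ))
    (by intro a ha
        rw [List.mem_ofFn] at ha
        obtain ⟨s, rfl⟩ := ha
        exact hnil s.succ)
    (m 0 • yI ℤ (I 0)) (hnil 0)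
    (unitOf (m 0 • yI ℤ (I 0)) (hnil 0).sq) rfl
    (List.ofFn fun s : Fin t => unitOf (m s.succ • yI ℤ (I s.succ)) (hnil s.succ).sq) hU
  rw [hmain]
  have hml : (List.ofFn fun s : Fin t => m s.succ • yI ℤ (I s.succ))
      = (List.ofFn fun s : Fin t => ((m s.succ : ℤ), yI ℤ (I s.succ))).map
          (fun p => p.1 • p.2) := by
    rw [List.map_ofFn]; rfl
  rw [hml, ringComm_smul, List.map_ofFn, List.map_ofFn]
  have h1 : (Prod.fst ∘ fun s : Fin t => ((m s.succ : ℤ), yI ℤ (I s.succ)))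
      = fun s : Fin t => m s.succ := rfl
  have h2 : (Prod.snd ∘ fun s : Fin t => ((m s.succ : ℤ), yI ℤ (I s.succ)))
      = fun s : Fin t => yI ℤ (I s.succ) := rfl
  rw [h1, h2]
  congr 1
  rw [List.prod_ofFn, Fin.prod_univ_succ]
end

section
/- Let A be an associative ring, n ≥ 1, and x_1,…,x_n ∈ A. Then the left-normed iterated ring commutator satisfies [[x_1,x_2],…,x_n] = Σ_{p=0}^{n−1} (−1)^p Σ x_{i_p}⋯x_{i_2}x_{i_1}·x_{j_1}x_{j_2}⋯x_{j_{n−p}}, where for each p the inner sum ranges over all decompositions of {1,…,n} into two disjoint increasing sequences 1 ≤ i_1 < i_2 < ⋯ < i_p ≤ n and 1 = j_1 < j_2 < ⋯ < j_{n−p} ≤ n whose union is {1,…,n} (equivalently, (i_1 < ⋯ < i_p) ranges over all subsets of {2,…,n} of size p, and (j_1 < ⋯ < j_{n−p}) is the increasing enumeration of the complement, which contains 1). -/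
def finSuccOE (t : ℕ) : Fin t ↪o Fin (t+1) :=
  OrderEmbedding.ofStrictMono Fin.succ fun _ _ h => Fin.succ_lt_succ_iff.mpr h

lemma finSuccOE_apply (t : ℕ) (i : Fin t) : finSuccOE t i = i.succ := rfl

lemma sort_map_oe {α β : Type*} [LinearOrder α] [LinearOrder β] (f : α ↪o β)
    (s : Finset α) :
    (s.map f.toEmbedding).sort (· ≤ ·) = (s.sort (· ≤ ·)).map f := by
  haveI : IsAntisymm β (· ≤ ·) := ⟨fun a b => le_antisymm⟩
  refine (fun (hp : List.Perm _ _) (h1 : List.Pairwise (fun a b : β => a ≤ b) _) h2 =>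
    List.Perm.eq_of_pairwise (fun a b _ _ h h' => le_antisymm h h') h1 h2 hp) ?_ ?_ ?_
  · apply Multiset.coe_eq_coe.mp
    rw [Finset.sort_eq, Finset.map_val, ← Multiset.map_coe, Finset.sort_eq]; rfl
  · exact Finset.pairwise_sort _ _
  · exact List.Pairwise.map f (fun a b h => f.le_iff_le.mpr h) (Finset.pairwise_sort s _)

lemma powerset_map' {α β : Type*} (f : α ↪ β) (s : Finset α) :
    (s.map f).powerset = s.powerset.map (Finset.mapEmbedding f).toEmbedding := by
  ext T
  simp only [Finset.mem_powerset, Finset.subset_map_iff, Finset.mem_map,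
    Finset.mapEmbedding_apply]
  constructor
  · rintro ⟨u, hu, rfl⟩; exact ⟨u, hu, rfl⟩
  · rintro ⟨u, hu, rfl⟩; exact ⟨u, hu, rfl⟩

lemma compl_map_succ {t : ℕ} (U : Finset (Fin t)) :
    (U.map (finSuccOE t).toEmbedding)ᶜ = insert 0 (Uᶜ.map (finSuccOE t).toEmbedding) := by
  ext i
  cases i using Fin.cases with
  | zero => simp [finSuccOE_apply, Fin.succ_ne_zero, (Fin.succ_ne_zero _).symm]
  | succ j => simp [finSuccOE_apply, Fin.succ_inj, (Fin.succ_ne_zero _)]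

lemma zero_not_mem_map_succ {t : ℕ} (U : Finset (Fin t)) :
    (0 : Fin (t+1)) ∉ U.map (finSuccOE t).toEmbedding := by
  simp [finSuccOE_apply, Fin.succ_ne_zero]

lemma sort_insert_zero {t : ℕ} (W : Finset (Fin (t+1))) (h : (0 : Fin (t+1)) ∉ W) :
    (insert (0 : Fin (t+1)) W).sort (· ≤ ·) = 0 :: W.sort (· ≤ ·) :=
  Finset.sort_insert _ (fun b _ => Fin.zero_le b) h

lemma compl_insert_zero {t : ℕ} (U : Finset (Fin t)) :
    (insert (0 : Fin (t+1)) (U.map (finSuccOE t).toEmbedding))ᶜ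
      = Uᶜ.map (finSuccOE t).toEmbedding := by
  rw [Finset.compl_insert, compl_map_succ, Finset.erase_insert (zero_not_mem_map_succ _)]

lemma key {A : Type*} [Ring A] (t : ℕ) (a : A) (x : Fin t → A) :
    ringComm a (List.ofFn x)
      = ∑ S : Finset (Fin t), (-1 : ℤ) ^ S.card •
          (((S.sort (· ≤ ·)).reverse.map x).prod *
            (a * ((Sᶜ.sort (· ≤ ·)).map x).prod)) := by
  induction t generalizing a with
  | zero =>
    have h : ∀ S : Finset (Fin 0), S = ∅ := fun S => Finset.eq_empty_of_isEmpty S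
    simp only [List.ofFn_zero, ringComm, List.foldl_nil, Finset.univ_unique,
      Finset.sum_singleton]
    rw [h default, h ∅ᶜ]
    simp
  | succ t ih =>
    have hcons : ringComm a (List.ofFn x)
        = ringComm (a * x 0 - x 0 * a) (List.ofFn fun i : Fin t => x i.succ) := by
      rw [List.ofFn_succ]; rfl
    rw [hcons, ih]
    -- now rewrite RHS
    have huniv : (Finset.univ : Finset (Fin (t+1)))
        = insert 0 (Finset.univ.map (finSuccOE t).toEmbedding) := by
      ext i
      cases i using Fin.cases with
      | zero => simp
      | succ j => simp [finSuccOE_apply]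
    rw [← Finset.powerset_univ (α := Fin (t+1)), huniv,
      Finset.sum_powerset_insert (zero_not_mem_map_succ _),
      powerset_map', Finset.sum_map, Finset.sum_map, Finset.powerset_univ,
      ← Finset.sum_add_distrib]
    apply Finset.sum_congr rfl
    intro U _
    simp only [RelEmbedding.coe_toEmbedding, Finset.mapEmbedding_apply]
    rw [compl_map_succ U, compl_insert_zero U,
      sort_insert_zero _ (zero_not_mem_map_succ Uᶜ),
      sort_insert_zero _ (zero_not_mem_map_succ U),
      sort_map_oe, sort_map_oe]
    have hco : x ∘ ⇑(finSuccOE t) = fun i => x i.succ := rfl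
    simp only [Finset.card_map, Finset.card_insert_of_notMem (zero_not_mem_map_succ U),
      List.map_cons, List.map_reverse, List.map_map, List.reverse_cons, List.prod_cons,
      List.prod_append, List.map_append, List.map_nil, List.prod_nil, hco]
    rw [pow_add, pow_one, mul_neg_one, neg_zsmul, ← sub_eq_add_neg, ← smul_sub]
    congr 1
    noncomm_ring

theorem iterated_commutator_expansion (A : Type*) [Ring A] (t : ℕ) (x : Fin (t+1) → A) :
    ringComm (x 0) (List.ofFn fun s : Fin t => x s.succ)
      = ∑ S ∈ Finset.univ.filter (fun S : Finset (Fin (t+1)) => (0 : Fin (t+1)) ∉ S),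
          (-1 : ℤ) ^ S.card •
            ((((S.sort (· ≤ ·)).reverse).map x).prod *
              (((Sᶜ.sort (· ≤ ·)).map x).prod)) := by
  rw [key t (x 0) (fun s => x s.succ)]
  have hfilter : Finset.univ.filter (fun S : Finset (Fin (t+1)) => (0 : Fin (t+1)) ∉ S)
      = Finset.univ.map ⟨fun U : Finset (Fin t) => U.map (finSuccOE t).toEmbedding,
          Finset.map_injective _⟩ := by
    ext S
    simp only [Finset.mem_filter, Finset.mem_univ, true_and, Finset.mem_map,
      Function.Embedding.coeFn_mk]
    constructor
    · intro h
      have hsub : S ⊆ Finset.univ.map (finSuccOE t).toEmbedding := by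
        intro i hi
        have hne : i ≠ 0 := fun he => h (he ▸ hi)
        obtain ⟨j, hj⟩ := Fin.exists_succ_eq.mpr hne
        exact Finset.mem_map.mpr ⟨j, Finset.mem_univ j, hj⟩
      obtain ⟨U, _, rfl⟩ := Finset.subset_map_iff.mp hsub
      exact ⟨U, rfl⟩
    · rintro ⟨U, rfl⟩
      exact zero_not_mem_map_succ U
  rw [hfilter, Finset.sum_map]
  apply Finset.sum_congr rfl
  intro U _
  have hco : x ∘ ⇑(finSuccOE t) = fun i => x i.succ := rfl
  simp only [Function.Embedding.coeFn_mk]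
  rw [compl_map_succ U, sort_insert_zero _ (zero_not_mem_map_succ Uᶜ),
    sort_map_oe, sort_map_oe]
  simp only [Finset.card_map, List.map_cons, List.map_reverse, List.map_map,
    List.prod_cons, hco]
end

section
/- Let G be a group, let A be an associative ring equipped with an augmentation, i.e. a ring homomorphism ε : A → ℤ, with augmentation ideal I(A) = ker ε, and let e : G → Aˣ be a group homomorphism into the units of A such that ε(e(g)) = 1 for all g ∈ G. Let Γ^t(G) denote the lower central series of G, with Γ^1(G) = G and Γ^{t+1}(G) = [Γ^t(G), G]. Then: (1) for every t ≥ 1 and every g ∈ Γ^t(G), e(g) − 1 ∈ I(A)^t, the t-fold product of the augmentation ideal; (2) consequently the map g ↦ (e(g) − 1) + I(A)^{t+1} induces a well-defined homomorphism of abelian groups Γ^t(G)/Γ^{t+1}(G) → I(A)^t/I(A)^{t+1}. -/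
/-!
STATEMENT 17: Let `G` be a group, `A` an associative ring with an augmentation `ε : A → ℤ`
with augmentation ideal `I(A) = ker ε`, and `e : G → Aˣ` a group homomorphism with
`ε(e(g)) = 1` for all `g`.  With `Γ^t(G)` the lower central series (`Γ^1(G) = G`), then:
(1) for every `t ≥ 1` and `g ∈ Γ^t(G)` one has `e(g) − 1 ∈ I(A)^t`;
(2) consequently the map `g ↦ (e(g) − 1) + I(A)^{t+1}` induces a well-defined homomorphism of
abelian groups `Γ^t(G)/Γ^{t+1}(G) → I(A)^t/I(A)^{t+1}`: it sends `Γ^{t+1}(G)` into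
`I(A)^{t+1}` and is additive modulo `I(A)^{t+1}`.
(Powers of the augmentation ideal are taken as powers of the corresponding `ℤ`-submodule
of `A`, which is the `t`-fold product of the ideal.)
-/

section
variable {G : Type*} [Group G] {A : Type*} [Ring A] (ε : A →+* ℤ)

/-- left multiplication by an element of `ker ε` preserves `I^(n+1)`. -/
theorem aux_left_mul (n : ℕ) {a : A} (ha : ε a = 0) {m : A}
    (hm : m ∈ ((RingHom.ker ε).restrictScalars ℤ : Submodule ℤ A) ^ (n+1)) :
    a * m ∈ ((RingHom.ker ε).restrictScalars ℤ : Submodule ℤ A) ^ (n+1) := by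
  set I : Submodule ℤ A := (RingHom.ker ε).restrictScalars ℤ with hI
  rw [pow_succ'] at hm ⊢
  refine Submodule.mul_induction_on hm (fun x hx y hy => ?_) (fun x y hx hy => ?_)
  · rw [← mul_assoc]
    exact Submodule.mul_mem_mul (by
      simp only [hI, Submodule.restrictScalars_mem, RingHom.mem_ker, map_mul, ha, zero_mul]) hy
  · rw [mul_add]; exact add_mem hx hy

theorem aux_right_mul (n : ℕ) {b : A} (hb : ε b = 0) {m : A}
    (hm : m ∈ ((RingHom.ker ε).restrictScalars ℤ : Submodule ℤ A) ^ (n+1)) :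
    m * b ∈ ((RingHom.ker ε).restrictScalars ℤ : Submodule ℤ A) ^ (n+1) := by
  set I : Submodule ℤ A := (RingHom.ker ε).restrictScalars ℤ with hI
  rw [pow_succ] at hm ⊢
  refine Submodule.mul_induction_on hm (fun x hx y hy => ?_) (fun x y hx hy => ?_)
  · rw [mul_assoc]
    exact Submodule.mul_mem_mul hx (by
      simp only [hI, Submodule.restrictScalars_mem, RingHom.mem_ker, map_mul, hb, mul_zero])
  · rw [add_mul]; exact add_mem hx hy

theorem aux_unit_left_mul (n : ℕ) {u : Aˣ} (hu : ε (u : A) = 1) {m : A}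
    (hm : m ∈ ((RingHom.ker ε).restrictScalars ℤ : Submodule ℤ A) ^ (n+1)) :
    (u : A) * m ∈ ((RingHom.ker ε).restrictScalars ℤ : Submodule ℤ A) ^ (n+1) := by
  have : (u : A) * m = m + ((u : A) - 1) * m := by noncomm_ring
  rw [this]
  exact add_mem hm (aux_left_mul ε n (by simp [hu]) hm)

theorem aux_unit_right_mul (n : ℕ) {u : Aˣ} (hu : ε (u : A) = 1) {m : A}
    (hm : m ∈ ((RingHom.ker ε).restrictScalars ℤ : Submodule ℤ A) ^ (n+1)) :
    m * (u : A) ∈ ((RingHom.ker ε).restrictScalars ℤ : Submodule ℤ A) ^ (n+1) := by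
  have : m * (u : A) = m + m * ((u : A) - 1) := by noncomm_ring
  rw [this]
  exact add_mem hm (aux_right_mul ε n (by simp [hu]) hm)

theorem aux_key (e : G →* Aˣ) (he : ∀ g : G, ε ((e g : Aˣ) : A) = 1) :
    ∀ n : ℕ, ∀ g ∈ (⊤ : Subgroup G).lowerCentralSeries n,
      (((e g : Aˣ) : A) - 1) ∈ ((RingHom.ker ε).restrictScalars ℤ : Submodule ℤ A) ^ (n+1) := by
  set I : Submodule ℤ A := (RingHom.ker ε).restrictScalars ℤ with hI
  have hmemI : ∀ g : G, ((e g : Aˣ) : A) - 1 ∈ I := by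
    intro g
    simp [hI, RingHom.mem_ker, he g]
  intro n
  induction n with
  | zero => intro g _; simpa using hmemI g
  | succ n ih =>
    intro g hg
    rw [Subgroup.lowerCentralSeries_succ] at hg
    refine Subgroup.closure_induction (fun c hc => ?_) ?_ (fun x y _ _ hx hy => ?_)
      (fun x _ hx => ?_) hg
    · -- generator : commutator
      obtain ⟨x, hx, y, -, rfl⟩ := hc
      have ha := ih x hx
      have hb := hmemI y
      have hcom : ((e x : A)) * (e y : A) - (e y : A) * (e x : A)
          ∈ I ^ (n + 2) := by
        have h1 : ((e x : A) - 1) * ((e y : A) - 1) ∈ I ^ (n+1) * I :=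
          Submodule.mul_mem_mul ha hb
        have h2 : ((e y : A) - 1) * ((e x : A) - 1) ∈ I * I ^ (n+1) :=
          Submodule.mul_mem_mul hb ha
        rw [← pow_succ] at h1
        rw [← pow_succ'] at h2
        have heq : (e x : A) * (e y : A) - (e y : A) * (e x : A)
            = ((e x : A) - 1) * ((e y : A) - 1) - ((e y : A) - 1) * ((e x : A) - 1) := by
          noncomm_ring
        rw [heq]
        exact sub_mem h1 h2
      have hinvx : ε (((e x)⁻¹ : Aˣ) : A) = 1 := by
        have h := congrArg ε (Units.inv_mul (e x))
        rw [map_mul, he x, map_one, mul_one] at h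
        exact h
      have hinvy : ε (((e y)⁻¹ : Aˣ) : A) = 1 := by
        have h := congrArg ε (Units.inv_mul (e y))
        rw [map_mul, he y, map_one, mul_one] at h
        exact h
      have key : ((e (x * y * x⁻¹ * y⁻¹) : Aˣ) : A) - 1
          = (((e x : A) * (e y : A) - (e y : A) * (e x : A)) * (((e x)⁻¹ : Aˣ) : A))
              * (((e y)⁻¹ : Aˣ) : A) := by
        have h1 : ((e (x * y * x⁻¹ * y⁻¹) : Aˣ) : A)
            = (e x : A) * (e y : A) * (((e x)⁻¹ : Aˣ) : A) * (((e y)⁻¹ : Aˣ) : A) := by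
          simp [map_mul]
        rw [h1, sub_mul, sub_mul, Units.mul_inv_cancel_right, Units.mul_inv]
      rw [commutatorElement_def, key]
      exact aux_unit_right_mul ε (n+1) hinvy (aux_unit_right_mul ε (n+1) hinvx hcom)
    · simp
    · -- mul
      have : ((e (x * y) : Aˣ) : A) - 1
          = (((e x : Aˣ) : A) - 1) * (((e y : Aˣ) : A) - 1)
            + (((e x : Aˣ) : A) - 1) + (((e y : Aˣ) : A) - 1) := by
        rw [map_mul]; push_cast; noncomm_ring
      rw [this]
      have hprod : (((e x : Aˣ) : A) - 1) * (((e y : Aˣ) : A) - 1) ∈ I ^ (n+2) :=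
        aux_right_mul ε (n+1) (by simp [he y]) hx
      exact add_mem (add_mem hprod hx) hy
    · -- inv
      have hinvx : ε ((e x)⁻¹ : Aˣ) = 1 := by
        have := congrArg ε (Units.inv_mul (e x))
        rw [map_mul, he x, map_one, mul_one] at this
        exact this
      have : ((e x⁻¹ : Aˣ) : A) - 1 = -((((e x)⁻¹ : Aˣ) : A) * (((e x : Aˣ) : A) - 1)) := by
        rw [map_inv]
        have h1 : (((e x)⁻¹ : Aˣ) : A) * ((e x : Aˣ) : A) = 1 := Units.inv_mul _
        rw [mul_sub, h1, mul_one, neg_sub]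
      rw [this]
      exact neg_mem (aux_unit_left_mul ε (n+1) hinvx hx)

end

theorem augmentation_ideal_filtration (G : Type*) [Group G] (A : Type*) [Ring A]
    (ε : A →+* ℤ) (e : G →* Aˣ) (he : ∀ g : G, ε ((e g : Aˣ) : A) = 1) (t : ℕ) (ht : 1 ≤ t) :
    -- (1) `g ∈ Γ^t(G)` implies `e(g) - 1 ∈ I(A)^t`:
    (∀ g ∈ (⊤ : Subgroup G).lowerCentralSeries (t-1),
      (((e g : Aˣ) : A) - 1) ∈ ((RingHom.ker ε).restrictScalars ℤ : Submodule ℤ A) ^ t) ∧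
    -- (2) the induced map `Γ^t(G)/Γ^{t+1}(G) → I(A)^t/I(A)^{t+1}` is well defined:
    (∀ g ∈ (⊤ : Subgroup G).lowerCentralSeries t,
      (((e g : Aˣ) : A) - 1) ∈ ((RingHom.ker ε).restrictScalars ℤ : Submodule ℤ A) ^ (t+1)) ∧
    -- and additive modulo `I(A)^{t+1}`:
    (∀ g ∈ (⊤ : Subgroup G).lowerCentralSeries (t-1), ∀ h ∈ (⊤ : Subgroup G).lowerCentralSeries (t-1),
      ((((e (g * h) : Aˣ) : A) - 1) - ((((e g : Aˣ) : A) - 1) + (((e h : Aˣ) : A) - 1)))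
        ∈ ((RingHom.ker ε).restrictScalars ℤ : Submodule ℤ A) ^ (t+1)) := by
  refine ⟨?_, ?_, ?_⟩
  · intro g hg
    have h := aux_key ε e he (t-1) g hg
    rwa [Nat.sub_add_cancel ht] at h
  · intro g hg
    exact aux_key ε e he t g hg
  · intro g hg h hh
    have h1 := aux_key ε e he (t-1) g hg
    rw [Nat.sub_add_cancel ht] at h1
    have h2 : ((e h : Aˣ) : A) - 1 ∈ ((RingHom.ker ε).restrictScalars ℤ : Submodule ℤ A) := by
      simp [RingHom.mem_ker, he h]
    have hm := Submodule.mul_mem_mul h1 h2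
    rw [← pow_succ] at hm
    have heq : (((e (g * h) : Aˣ) : A) - 1) - ((((e g : Aˣ) : A) - 1) + (((e h : Aˣ) : A) - 1))
        = (((e g : Aˣ) : A) - 1) * (((e h : Aˣ) : A) - 1) := by
      rw [map_mul]; push_cast; noncomm_ring
    rw [heq]
    exact hm
end
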